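/- arXiv:1808.03905 — 2 statements merged into one kernel-verified Lean document; each statement's English description precedes it below -/
import Mathlib

section
/- Let R be a Γ-graded von Neumann regular graded right self-injective ring of gr-Type I. Then the degree-zero component R_0 contains a faithful abelian idempotent, i.e. R_0 is a regular right self-injective ring of Type I. -/
/- Setting: `Γ = ι` an additive abelian group, `R` a `ι`-graded ring with identity,
with homogeneous components the additive subgroups `𝒜 γ`. -/

variable {ι R : Type*}

section Defs
variable [DecidableEq ι] [AddCommGroup ι] [Ring R] (𝒜 : ι → AddSubgroup R) [GradedRing 𝒜]

/-- An element of `R` is homogeneous if it lies in some component `𝒜 γ`. -/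
def IsHomog (a : R) : Prop := ∃ γ : ι, a ∈ 𝒜 γ

/-- `R` is graded von Neumann regular: every homogeneous element has an inner inverse. -/
def GradedVNRegular : Prop := ∀ a : R, IsHomog 𝒜 a → ∃ b : R, a * b * a = a

/-- A subset of `R` is a right ideal. -/
def IsRightIdealSet (I : Set R) : Prop :=
  (0 : R) ∈ I ∧ (∀ x ∈ I, ∀ y ∈ I, x + y ∈ I) ∧ ∀ x ∈ I, ∀ r : R, x * r ∈ I

/-- A graded right ideal: a right ideal containing all homogeneous components of
its elements. -/
def IsGradedRightIdeal (I : Set R) : Prop :=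
  IsRightIdealSet I ∧ ∀ x ∈ I, ∀ γ : ι, ((DirectSum.decompose 𝒜 x γ : 𝒜 γ) : R) ∈ I

/-- `A` is graded essential in `B` (as graded right ideals): `A ⊆ B` and every nonzero
graded right ideal contained in `B` meets `A` nontrivially. -/
def GradedEssentialIn (A B : Set R) : Prop :=
  A ⊆ B ∧ ∀ J : Set R, IsGradedRightIdeal 𝒜 J → J ⊆ B → (∃ x ∈ J, x ≠ 0) →
    ∃ x, x ∈ A ∩ J ∧ x ≠ 0

/-- Graded Baer criterion: `R` is graded right self-injective. A homomorphism from a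
graded right ideal `I` to `R` is encoded as a function `f : R → R` which is additive on
`I`, right `R`-linear on `I`, and of degree `γ` on `I`. -/
def GradedSelfInjective : Prop :=
  ∀ I : Set R, IsGradedRightIdeal 𝒜 I → ∀ γ : ι, ∀ f : R → R,
    (∀ x ∈ I, ∀ y ∈ I, f (x + y) = f x + f y) →
    (∀ x ∈ I, ∀ r : R, f (x * r) = f x * r) →
    (∀ δ : ι, ∀ x ∈ I, x ∈ 𝒜 δ → f x ∈ 𝒜 (γ + δ)) →
    ∃ c ∈ 𝒜 γ, ∀ x ∈ I, f x = c * x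

/-- A homogeneous idempotent of `R`. -/
def IsHomogIdem (e : R) : Prop := IsHomog 𝒜 e ∧ e * e = e

/-- A graded abelian idempotent: every homogeneous idempotent of the corner ring `eRe`
is central in `eRe` (membership `f ∈ eRe` is expressed as `e * f * e = f`). -/
def GrAbelianIdem (e : R) : Prop :=
  IsHomogIdem 𝒜 e ∧ ∀ f : R, IsHomog 𝒜 f → e * f * e = f → f * f = f →
    ∀ x : R, e * x * e = x → f * x = x * f

/-- A graded directly finite idempotent: for homogeneous `x, y ∈ eRe`,
`x * y = e` implies `y * x = e`. -/
def GrDirFinIdem (e : R) : Prop :=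
  IsHomogIdem 𝒜 e ∧ ∀ x y : R, IsHomog 𝒜 x → IsHomog 𝒜 y →
    e * x * e = x → e * y * e = y → x * y = e → y * x = e

/-- A graded faithful idempotent: the only central homogeneous idempotent `y`
with `e * y = 0` is `y = 0`. -/
def GrFaithfulIdem (e : R) : Prop :=
  IsHomogIdem 𝒜 e ∧ ∀ y : R, IsHomog 𝒜 y → y * y = y → (∀ r : R, y * r = r * y) →
    e * y = 0 → y = 0

/-- `R` is of gr-Type I: it contains a graded faithful graded abelian idempotent. -/
def GrTypeI : Prop := ∃ e : R, GrFaithfulIdem 𝒜 e ∧ GrAbelianIdem 𝒜 e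

/-- `R` is of gr-Type II: it contains a graded faithful graded directly finite idempotent
but no nonzero graded abelian idempotent. -/
def GrTypeII : Prop :=
  (∃ e : R, GrFaithfulIdem 𝒜 e ∧ GrDirFinIdem 𝒜 e) ∧ ∀ e : R, GrAbelianIdem 𝒜 e → e = 0

/-- The degree-zero component `R₀ = 𝒜 0` is a von Neumann regular ring. -/
def ZeroRegular : Prop := ∀ a ∈ 𝒜 (0 : ι), ∃ b ∈ 𝒜 (0 : ι), a * b * a = a

/-- A right ideal of the ring `R₀ = 𝒜 0`, encoded as a subset of `R`. -/
def IsRightIdealOfZero (I : Set R) : Prop :=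
  I ⊆ (𝒜 (0 : ι) : Set R) ∧ (0 : R) ∈ I ∧ (∀ x ∈ I, ∀ y ∈ I, x + y ∈ I) ∧
    ∀ x ∈ I, ∀ r ∈ 𝒜 (0 : ι), x * r ∈ I

/-- Baer criterion for the ring `R₀ = 𝒜 0`: `R₀` is right self-injective. -/
def ZeroSelfInjective : Prop :=
  ∀ I : Set R, IsRightIdealOfZero 𝒜 I → ∀ f : R → R,
    (∀ x ∈ I, f x ∈ 𝒜 (0 : ι)) →
    (∀ x ∈ I, ∀ y ∈ I, f (x + y) = f x + f y) →
    (∀ x ∈ I, ∀ r ∈ 𝒜 (0 : ι), f (x * r) = f x * r) →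
    ∃ c ∈ 𝒜 (0 : ι), ∀ x ∈ I, f x = c * x

/-- An abelian idempotent of the ring `R₀ = 𝒜 0`: every idempotent of `e R₀ e`
is central in `e R₀ e`. -/
def ZeroAbelianIdem (e : R) : Prop :=
  e ∈ 𝒜 (0 : ι) ∧ e * e = e ∧ ∀ f ∈ 𝒜 (0 : ι), e * f * e = f → f * f = f →
    ∀ x ∈ 𝒜 (0 : ι), e * x * e = x → f * x = x * f

/-- A directly finite idempotent of the ring `R₀ = 𝒜 0`. -/
def ZeroDirFinIdem (e : R) : Prop :=
  e ∈ 𝒜 (0 : ι) ∧ e * e = e ∧ ∀ x ∈ 𝒜 (0 : ι), ∀ y ∈ 𝒜 (0 : ι),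
    e * x * e = x → e * y * e = y → x * y = e → y * x = e

/-- A faithful idempotent of the ring `R₀ = 𝒜 0`: the only central idempotent `y` of `R₀`
with `e * y = 0` is `y = 0`. -/
def ZeroFaithfulIdem (e : R) : Prop :=
  e ∈ 𝒜 (0 : ι) ∧ e * e = e ∧ ∀ y ∈ 𝒜 (0 : ι), y * y = y →
    (∀ r ∈ 𝒜 (0 : ι), y * r = r * y) → e * y = 0 → y = 0

end Defs

set_option linter.unusedSectionVars false
section Aux
variable [DecidableEq ι] [AddCommGroup ι] [Ring R] (𝒜 : ι → AddSubgroup R) [GradedRing 𝒜]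

def Dc (γ : ι) (x : R) : R := ((DirectSum.decompose 𝒜 x γ : 𝒜 γ) : R)

lemma Dc_mem (γ : ι) (x : R) : Dc 𝒜 γ x ∈ 𝒜 γ := SetLike.coe_mem _

lemma Dc_add (γ : ι) (x y : R) : Dc 𝒜 γ (x + y) = Dc 𝒜 γ x + Dc 𝒜 γ y := by
  unfold Dc; rw [DirectSum.decompose_add, DirectSum.add_apply]; rfl

lemma Dc_same {γ : ι} {x : R} (h : x ∈ 𝒜 γ) : Dc 𝒜 γ x = x :=
  DirectSum.decompose_of_mem_same 𝒜 h

lemma Dc_ne {γ δ : ι} {x : R} (h : x ∈ 𝒜 γ) (hne : γ ≠ δ) : Dc 𝒜 δ x = 0 :=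
  DirectSum.decompose_of_mem_ne 𝒜 h hne

lemma Dc_mul_left {σ : ι} {a : R} (ha : a ∈ 𝒜 σ) (γ : ι) (x : R) :
    Dc 𝒜 (σ + γ) (a * x) = a * Dc 𝒜 γ x :=
  DirectSum.coe_decompose_mul_add_of_left_mem 𝒜 ha

lemma Dc_mul_right {σ : ι} {a : R} (ha : a ∈ 𝒜 σ) (γ : ι) (x : R) :
    Dc 𝒜 (γ + σ) (x * a) = Dc 𝒜 γ x * a :=
  DirectSum.coe_decompose_mul_add_of_right_mem 𝒜 ha

lemma Dc_mul_zero_left {a : R} (ha : a ∈ 𝒜 0) (γ : ι) (x : R) :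
    Dc 𝒜 γ (a * x) = a * Dc 𝒜 γ x := by
  have := Dc_mul_left 𝒜 ha γ x; rwa [zero_add] at this

lemma Dc_mul_zero_right {a : R} (ha : a ∈ 𝒜 0) (γ : ι) (x : R) :
    Dc 𝒜 γ (x * a) = Dc 𝒜 γ x * a := by
  have := Dc_mul_right 𝒜 ha γ x; rwa [add_zero] at this

lemma Dc_sum (x : R) : ∃ s : Finset ι, x = ∑ γ ∈ s, Dc 𝒜 γ x := by
  classical
  exact ⟨(DirectSum.decompose 𝒜 x).support, (DirectSum.sum_support_decompose 𝒜 x).symm⟩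

lemma exists_Dc_ne_zero {x : R} (hx : x ≠ 0) : ∃ γ, Dc 𝒜 γ x ≠ 0 := by
  by_contra h
  push_neg at h
  obtain ⟨s, hs⟩ := Dc_sum 𝒜 x
  exact hx (by rw [hs]; exact Finset.sum_eq_zero fun γ _ => h γ)

lemma mem_two_deg_eq_zero {γ δ : ι} {x : R} (h1 : x ∈ 𝒜 γ) (h2 : x ∈ 𝒜 δ) (hne : γ ≠ δ) :
    x = 0 := by
  have := Dc_ne 𝒜 h1 hne
  rwa [Dc_same 𝒜 h2] at this

lemma one_mem_zero : (1 : R) ∈ 𝒜 0 := SetLike.one_mem_graded 𝒜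

lemma hom_reg (hreg : GradedVNRegular 𝒜) {γ : ι} {a : R} (ha : a ∈ 𝒜 γ) :
    ∃ b ∈ 𝒜 (-γ), a * b * a = a := by
  obtain ⟨b, hb⟩ := hreg a ⟨γ, ha⟩
  refine ⟨Dc 𝒜 (-γ) b, Dc_mem 𝒜 _ _, ?_⟩
  have h1 : Dc 𝒜 γ (a * (b * a)) = a * (Dc 𝒜 (-γ) b * a) := by
    have e1 : Dc 𝒜 (γ + 0) (a * (b * a)) = a * Dc 𝒜 0 (b * a) := Dc_mul_left 𝒜 ha 0 (b * a)
    have e2 : Dc 𝒜 (-γ + γ) (b * a) = Dc 𝒜 (-γ) b * a := Dc_mul_right 𝒜 ha (-γ) b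
    rw [add_zero] at e1
    rw [neg_add_cancel] at e2
    rw [e1, e2]
  rw [mul_assoc] at hb
  rw [hb, Dc_same 𝒜 ha] at h1
  rw [mul_assoc]
  exact h1.symm

lemma zero_regular_of (hreg : GradedVNRegular 𝒜) : ZeroRegular 𝒜 := by
  intro a ha
  obtain ⟨b, hb, hab⟩ := hom_reg 𝒜 hreg ha
  rw [neg_zero] at hb
  exact ⟨b, hb, hab⟩

lemma neg_one_mem_zero : (-1 : R) ∈ 𝒜 0 := neg_mem (one_mem_zero 𝒜)

lemma ideal_neg {I : Set R} (hI : IsRightIdealOfZero 𝒜 I) {x : R} (hx : x ∈ I) : -x ∈ I := by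
  have := hI.2.2.2 x hx (-1) (neg_one_mem_zero 𝒜)
  rwa [mul_neg_one] at this

lemma ideal_sub {I : Set R} (hI : IsRightIdealOfZero 𝒜 I) {x y : R} (hx : x ∈ I)
    (hy : y ∈ I) : x - y ∈ I := by
  rw [sub_eq_add_neg]
  exact hI.2.2.1 x hx _ (ideal_neg 𝒜 hI hy)

lemma idem_cover (hz : ZeroRegular 𝒜) {I : Set R} (hI : IsRightIdealOfZero 𝒜 I) :
    ∀ l : List R, (∀ x ∈ l, x ∈ I) → ∃ e ∈ I, e * e = e ∧ ∀ x ∈ l, e * x = x := by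
  intro l
  induction l with
  | nil => exact fun _ => ⟨0, hI.2.1, by rw [mul_zero], by simp⟩
  | cons x l ih =>
    intro hmem
    obtain ⟨e, heI, hee, hcov⟩ := ih (fun z hz' => hmem z (List.mem_cons_of_mem _ hz'))
    have hxI : x ∈ I := hmem x (List.mem_cons_self)
    have hx0 : x ∈ 𝒜 0 := hI.1 hxI
    have he0 : e ∈ 𝒜 0 := hI.1 heI
    have hexI : e * x ∈ I := hI.2.2.2 e heI x hx0
    obtain ⟨y, hy⟩ : ∃ y : R, y = x - e * x := ⟨_, rfl⟩
    have hyI : y ∈ I := hy ▸ ideal_sub 𝒜 hI hxI hexI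
    have hy0 : y ∈ 𝒜 0 := hI.1 hyI
    have hey : e * y = 0 := by rw [hy, mul_sub, ← mul_assoc, hee, sub_self]
    obtain ⟨c, hc0, hcyc⟩ := hz y hy0
    obtain ⟨f1, hf1⟩ : ∃ f1 : R, f1 = y * c := ⟨_, rfl⟩
    have hf1I : f1 ∈ I := hf1 ▸ hI.2.2.2 y hyI c hc0
    have hf1y : f1 * y = y := by rw [hf1]; exact hcyc
    have hf1f1 : f1 * f1 = f1 := by
      rw [hf1, ← mul_assoc, hcyc]
    have hef1 : e * f1 = 0 := by rw [hf1, ← mul_assoc, hey, zero_mul]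
    obtain ⟨g, hg⟩ : ∃ g : R, g = f1 - f1 * e := ⟨_, rfl⟩
    have hgI : g ∈ I := hg ▸ ideal_sub 𝒜 hI hf1I (hI.2.2.2 f1 hf1I e he0)
    have heg : e * g = 0 := by
      rw [hg, mul_sub, ← mul_assoc, hef1, zero_mul, sub_self]
    have hge : g * e = 0 := by
      rw [hg, sub_mul, mul_assoc, hee, sub_self]
    have hgg : g * g = g := by
      have h2 : f1 * e * f1 = 0 := by rw [mul_assoc, hef1, mul_zero]
      have h3 : g * f1 = f1 := by rw [hg, sub_mul, hf1f1, h2, sub_zero]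
      calc g * g = g * f1 - g * f1 * e := by rw [hg, mul_sub, mul_assoc]
        _ = f1 - f1 * e := by rw [h3]
        _ = g := hg.symm
    have hgy : g * y = y := by
      rw [hg, sub_mul, hf1y, mul_assoc, hey, mul_zero, sub_zero]
    refine ⟨e + g, hI.2.2.1 e heI g hgI, ?_, ?_⟩
    · calc (e + g) * (e + g) = e * e + e * g + (g * e + g * g) := by
            rw [add_mul, mul_add, mul_add]
      _ = e + g := by rw [hee, heg, hge, hgg, add_zero, zero_add]
    · intro z hz'
      rcases List.mem_cons.mp hz' with h | h
      · subst h
        have hzd : z = y + e * z := by rw [hy]; abel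
        have hgz : g * z = y := by
          calc g * z = g * y + g * (e * z) := by rw [← mul_add, ← hzd]
            _ = y := by rw [hgy, ← mul_assoc, hge, zero_mul, add_zero]
        rw [add_mul, hgz, hy]; abel
      · have hez : e * z = z := hcov z h
        have hgz : g * z = 0 := by rw [← hez, ← mul_assoc, hge, zero_mul]
        rw [add_mul, hgz, hez, add_zero]

def lsum (l : List (R × R)) : R := (l.map fun p : R × R => p.1 * p.2).sum

def Fsum (f : R → R) (l : List (R × R)) : R := (l.map fun p : R × R => f p.1 * p.2).sum

lemma lsum_nil : lsum ([] : List (R × R)) = 0 := rfl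

lemma lsum_cons (p : R × R) (l : List (R × R)) : lsum (p :: l) = p.1 * p.2 + lsum l := by
  simp [lsum]

lemma lsum_append (l1 l2 : List (R × R)) : lsum (l1 ++ l2) = lsum l1 + lsum l2 := by
  simp [lsum]

lemma Fsum_cons (f : R → R) (p : R × R) (l : List (R × R)) :
    Fsum f (p :: l) = f p.1 * p.2 + Fsum f l := by simp [Fsum]

lemma Fsum_append (f : R → R) (l1 l2 : List (R × R)) :
    Fsum f (l1 ++ l2) = Fsum f l1 + Fsum f l2 := by simp [Fsum]

lemma lsum_scale (l : List (R × R)) (r : R) :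
    lsum (l.map fun p => (p.1, p.2 * r)) = lsum l * r := by
  induction l with
  | nil => simp [lsum]
  | cons p l ih => simp only [List.map_cons, lsum_cons, ih, add_mul, mul_assoc]

lemma Fsum_scale (f : R → R) (l : List (R × R)) (r : R) :
    Fsum f (l.map fun p => (p.1, p.2 * r)) = Fsum f l * r := by
  induction l with
  | nil => simp [Fsum]
  | cons p l ih => simp only [List.map_cons, Fsum_cons, ih, add_mul, mul_assoc]

def Jset (I : Set R) : Set R := {y | ∃ l : List (R × R), (∀ p ∈ l, p.1 ∈ I) ∧ y = lsum l}

lemma Dc_zero (γ : ι) : Dc 𝒜 γ (0 : R) = 0 := by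
  unfold Dc; rw [DirectSum.decompose_zero]; rfl

lemma Dc_lsum {I : Set R} (hIsub : I ⊆ (𝒜 (0 : ι) : Set R)) (γ : ι) (l : List (R × R))
    (hl : ∀ p ∈ l, p.1 ∈ I) :
    Dc 𝒜 γ (lsum l) = lsum (l.map fun p => (p.1, Dc 𝒜 γ p.2)) := by
  induction l with
  | nil => simp [lsum, Dc_zero]
  | cons p l ih =>
    have h1 : p.1 ∈ 𝒜 0 := hIsub (hl p (List.mem_cons_self))
    simp only [List.map_cons, lsum_cons]
    rw [Dc_add, Dc_mul_zero_left 𝒜 h1, ih (fun q hq => hl q (List.mem_cons_of_mem _ hq))]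

lemma Jset_graded {I : Set R} (hI : IsRightIdealOfZero 𝒜 I) :
    IsGradedRightIdeal 𝒜 (Jset I) := by
  refine ⟨⟨⟨[], by simp, lsum_nil.symm⟩, ?_, ?_⟩, ?_⟩
  · rintro x ⟨l1, hl1, rfl⟩ y ⟨l2, hl2, rfl⟩
    refine ⟨l1 ++ l2, ?_, (lsum_append l1 l2).symm⟩
    intro p hp
    rcases List.mem_append.mp hp with h | h
    exacts [hl1 p h, hl2 p h]
  · rintro x ⟨l, hl, rfl⟩ r
    refine ⟨l.map fun p => (p.1, p.2 * r), ?_, (lsum_scale l r).symm⟩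
    intro p hp
    obtain ⟨q, hq, rfl⟩ := List.mem_map.mp hp
    exact hl q hq
  · rintro x ⟨l, hl, rfl⟩ γ
    have hmem : ∀ p ∈ l.map fun p => (p.1, Dc 𝒜 γ p.2), p.1 ∈ I := by
      intro p hp
      obtain ⟨q, hq, rfl⟩ := List.mem_map.mp hp
      exact hl q hq
    exact ⟨_, hmem, Dc_lsum 𝒜 hI.1 γ l hl⟩

lemma Fsum_cov {I : Set R} (hI : IsRightIdealOfZero 𝒜 I) {f : R → R}
    (hflin : ∀ x ∈ I, ∀ r ∈ 𝒜 (0 : ι), f (x * r) = f x * r)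
    {e : R} (heI : e ∈ I) (l : List (R × R)) (hl : ∀ p ∈ l, p.1 ∈ I)
    (hcov : ∀ p ∈ l, e * p.1 = p.1) :
    Fsum f l = f e * lsum l := by
  induction l with
  | nil => simp [Fsum, lsum]
  | cons p l ih =>
    have h1 : p.1 ∈ I := hl p (List.mem_cons_self)
    have h10 : p.1 ∈ 𝒜 0 := hI.1 h1
    have hfp : f p.1 = f e * p.1 := by
      rw [← hcov p (List.mem_cons_self), hflin e heI p.1 h10]
      rw [hcov p (List.mem_cons_self)]
    rw [Fsum_cons, lsum_cons, mul_add, ← mul_assoc, ← hfp,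
      ih (fun q hq => hl q (List.mem_cons_of_mem _ hq))
        (fun q hq => hcov q (List.mem_cons_of_mem _ hq))]

lemma Fsum_wd (hz : ZeroRegular 𝒜) {I : Set R} (hI : IsRightIdealOfZero 𝒜 I) {f : R → R}
    (hflin : ∀ x ∈ I, ∀ r ∈ 𝒜 (0 : ι), f (x * r) = f x * r)
    (l1 l2 : List (R × R)) (hl1 : ∀ p ∈ l1, p.1 ∈ I) (hl2 : ∀ p ∈ l2, p.1 ∈ I)
    (heq : lsum l1 = lsum l2) : Fsum f l1 = Fsum f l2 := by
  obtain ⟨e, heI, -, hcov⟩ := idem_cover 𝒜 hz hI (l1.map Prod.fst ++ l2.map Prod.fst)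
    (by
      intro x hx
      rcases List.mem_append.mp hx with h | h
      · obtain ⟨p, hp, rfl⟩ := List.mem_map.mp h; exact hl1 p hp
      · obtain ⟨p, hp, rfl⟩ := List.mem_map.mp h; exact hl2 p hp)
  have hc1 : ∀ p ∈ l1, e * p.1 = p.1 := fun p hp =>
    hcov p.1 (List.mem_append.mpr (Or.inl (List.mem_map.mpr ⟨p, hp, rfl⟩)))
  have hc2 : ∀ p ∈ l2, e * p.1 = p.1 := fun p hp =>
    hcov p.1 (List.mem_append.mpr (Or.inr (List.mem_map.mpr ⟨p, hp, rfl⟩)))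
  rw [Fsum_cov 𝒜 hI hflin heI l1 hl1 hc1, Fsum_cov 𝒜 hI hflin heI l2 hl2 hc2, heq]

lemma zero_self_injective_of (hreg : GradedVNRegular 𝒜) (hinj : GradedSelfInjective 𝒜) :
    ZeroSelfInjective 𝒜 := by
  have hz : ZeroRegular 𝒜 := zero_regular_of 𝒜 hreg
  intro I hI f hf0 hfadd hflin
  classical
  obtain ⟨F, hF⟩ : ∃ F : R → R, ∀ y ∈ Jset I,
      ∀ l : List (R × R), (∀ p ∈ l, p.1 ∈ I) → y = lsum l → F y = Fsum f l := by
    refine ⟨fun y => if h : y ∈ Jset I then Fsum f h.choose else 0, ?_⟩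
    intro y hy l hl hyl
    change (if h : y ∈ Jset I then Fsum f h.choose else 0) = Fsum f l
    rw [dif_pos hy]
    exact Fsum_wd 𝒜 hz hI hflin _ l hy.choose_spec.1 hl (hy.choose_spec.2.symm.trans hyl)
  have hJ := Jset_graded 𝒜 hI
  have hadd : ∀ x ∈ Jset I, ∀ y ∈ Jset I, F (x + y) = F x + F y := by
    rintro x hx y hy
    obtain ⟨l1, hl1, hx1⟩ := hx
    obtain ⟨l2, hl2, hy2⟩ := hy
    have hsum : x + y = lsum (l1 ++ l2) := by rw [lsum_append, hx1, hy2]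
    have hmem : ∀ p ∈ l1 ++ l2, p.1 ∈ I := by
      intro p hp
      rcases List.mem_append.mp hp with h | h
      exacts [hl1 p h, hl2 p h]
    rw [hF (x + y) ⟨l1 ++ l2, hmem, hsum⟩ (l1 ++ l2) hmem hsum,
      hF x ⟨l1, hl1, hx1⟩ l1 hl1 hx1, hF y ⟨l2, hl2, hy2⟩ l2 hl2 hy2, Fsum_append]
  have hlin : ∀ x ∈ Jset I, ∀ r : R, F (x * r) = F x * r := by
    rintro x hx r
    obtain ⟨l, hl, hx1⟩ := hx
    have hmem : ∀ p ∈ l.map fun p => (p.1, p.2 * r), p.1 ∈ I := by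
      intro p hp
      obtain ⟨q, hq, rfl⟩ := List.mem_map.mp hp
      exact hl q hq
    have hsum : x * r = lsum (l.map fun p => (p.1, p.2 * r)) := by
      rw [lsum_scale, hx1]
    rw [hF (x * r) ⟨_, hmem, hsum⟩ _ hmem hsum, hF x ⟨l, hl, hx1⟩ l hl hx1, Fsum_scale]
  have hdeg : ∀ δ : ι, ∀ x ∈ Jset I, x ∈ 𝒜 δ → F x ∈ 𝒜 ((0 : ι) + δ) := by
    intro δ x hx hxδ
    obtain ⟨l, hl, hx1⟩ := hx
    obtain ⟨e, heI, -, hcov⟩ := idem_cover 𝒜 hz hI (l.map Prod.fst)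
      (by
        intro z hzm
        obtain ⟨p, hp, rfl⟩ := List.mem_map.mp hzm; exact hl p hp)
    have hc : ∀ p ∈ l, e * p.1 = p.1 := fun p hp =>
      hcov p.1 (List.mem_map.mpr ⟨p, hp, rfl⟩)
    have hFx : F x = f e * x := by
      rw [hF x ⟨l, hl, hx1⟩ l hl hx1, Fsum_cov 𝒜 hI hflin heI l hl hc, ← hx1]
    rw [hFx]
    exact SetLike.mul_mem_graded (hf0 e heI) hxδ
  obtain ⟨c, hc0, hc⟩ := hinj (Jset I) hJ 0 F hadd hlin hdeg
  refine ⟨c, hc0, ?_⟩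
  intro x hx
  have hxJ : x ∈ Jset I := ⟨[(x, 1)], by simpa using hx, by simp [lsum]⟩
  have h1 : F x = Fsum f [(x, 1)] := hF x hxJ [(x, 1)] (by simpa using hx) (by simp [lsum])
  have h2 : Fsum f [(x, 1)] = f x := by simp [Fsum]
  have h3 := hc x hxJ
  rw [h1, h2] at h3
  exact h3

lemma Dc_mul_left' {γ : ι} {a : R} (ha : a ∈ 𝒜 γ) (σ : ι) (x : R) :
    Dc 𝒜 σ (a * x) = a * Dc 𝒜 (-γ + σ) x := by
  have := Dc_mul_left 𝒜 ha (-γ + σ) x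
  rwa [← add_assoc, add_neg_cancel, zero_add] at this

lemma Dc_mul_right' {γ : ι} {a : R} (ha : a ∈ 𝒜 γ) (σ : ι) (x : R) :
    Dc 𝒜 σ (x * a) = Dc 𝒜 (σ + -γ) x * a := by
  have := Dc_mul_right 𝒜 ha (σ + -γ) x
  rwa [add_assoc, neg_add_cancel, add_zero] at this

lemma Dc_finsum {α : Type*} (γ : ι) (s : Finset α) (g : α → R) :
    Dc 𝒜 γ (∑ i ∈ s, g i) = ∑ i ∈ s, Dc 𝒜 γ (g i) := by
  classical
  induction s using Finset.induction_on with
  | empty => simp [Dc_zero]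
  | insert _ _ h ih => rw [Finset.sum_insert h, Finset.sum_insert h, Dc_add, ih]

def pIdeal (x : R) : Set R := {w | ∃ s : R, w = x * s}

lemma pIdeal_graded {γ : ι} {x : R} (hx : x ∈ 𝒜 γ) : IsGradedRightIdeal 𝒜 (pIdeal x) := by
  refine ⟨⟨⟨0, (mul_zero x).symm⟩, ?_, ?_⟩, ?_⟩
  · rintro _ ⟨s, rfl⟩ _ ⟨t, rfl⟩
    exact ⟨s + t, (mul_add x s t).symm⟩
  · rintro _ ⟨s, rfl⟩ r
    exact ⟨s * r, mul_assoc x s r⟩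
  · rintro _ ⟨s, rfl⟩ σ
    exact ⟨Dc 𝒜 (-γ + σ) s, Dc_mul_left' 𝒜 hx σ s⟩

lemma self_mem_pIdeal (x : R) : x ∈ pIdeal x := ⟨1, (mul_one x).symm⟩

lemma grIdeal_homog_elt {J : Set R} (hJ : IsGradedRightIdeal 𝒜 J) {x : R} (hx : x ∈ J)
    (hxne : x ≠ 0) : ∃ w γ, w ∈ J ∧ w ∈ 𝒜 γ ∧ w ≠ 0 := by
  obtain ⟨γ, hγ⟩ := exists_Dc_ne_zero 𝒜 hxne
  exact ⟨Dc 𝒜 γ x, γ, hJ.2 x hx γ, Dc_mem 𝒜 γ x, hγ⟩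

lemma grIdeal_inter {J K : Set R} (hJ : IsGradedRightIdeal 𝒜 J) (hK : IsGradedRightIdeal 𝒜 K) :
    IsGradedRightIdeal 𝒜 (J ∩ K) := by
  refine ⟨⟨⟨hJ.1.1, hK.1.1⟩, ?_, ?_⟩, ?_⟩
  · rintro x ⟨h1, h2⟩ y ⟨h3, h4⟩
    exact ⟨hJ.1.2.1 x h1 y h3, hK.1.2.1 x h2 y h4⟩
  · rintro x ⟨h1, h2⟩ r
    exact ⟨hJ.1.2.2 x h1 r, hK.1.2.2 x h2 r⟩
  · rintro x ⟨h1, h2⟩ γ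
    exact ⟨hJ.2 x h1 γ, hK.2 x h2 γ⟩

def sumSet (A B : Set R) : Set R := {x | ∃ a ∈ A, ∃ b ∈ B, x = a + b}

lemma grIdeal_sumSet {A B : Set R} (hA : IsGradedRightIdeal 𝒜 A) (hB : IsGradedRightIdeal 𝒜 B) :
    IsGradedRightIdeal 𝒜 (sumSet A B) := by
  refine ⟨⟨⟨0, hA.1.1, 0, hB.1.1, (add_zero 0).symm⟩, ?_, ?_⟩, ?_⟩
  · rintro x ⟨a, ha, b, hb, rfl⟩ y ⟨a', ha', b', hb', rfl⟩
    exact ⟨a + a', hA.1.2.1 a ha a' ha', b + b', hB.1.2.1 b hb b' hb', by abel⟩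
  · rintro x ⟨a, ha, b, hb, rfl⟩ r
    exact ⟨a * r, hA.1.2.2 a ha r, b * r, hB.1.2.2 b hb r, add_mul a b r⟩
  · rintro x ⟨a, ha, b, hb, rfl⟩ γ
    exact ⟨Dc 𝒜 γ a, hA.2 a ha γ, Dc 𝒜 γ b, hB.2 b hb γ, Dc_add 𝒜 γ a b⟩

lemma grIdeal_neg {J : Set R} (hJ : IsGradedRightIdeal 𝒜 J) {x : R} (hx : x ∈ J) : -x ∈ J := by
  have := hJ.1.2.2 x hx (-1)
  rwa [mul_neg_one] at this

lemma grIdeal_sub {J : Set R} (hJ : IsGradedRightIdeal 𝒜 J) {x y : R} (hx : x ∈ J)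
    (hy : y ∈ J) : x - y ∈ J := by
  rw [sub_eq_add_neg]
  exact hJ.1.2.1 x hx _ (grIdeal_neg 𝒜 hJ hy)

/-- Existence of a graded complement making the sum graded-essential. -/
lemma exists_gr_complement {T : Set R} (hT : IsGradedRightIdeal 𝒜 T) :
    ∃ T' : Set R, IsGradedRightIdeal 𝒜 T' ∧ (∀ x ∈ T, x ∈ T' → x = 0) ∧
      ∀ J : Set R, IsGradedRightIdeal 𝒜 J → (∃ x ∈ J, x ≠ 0) →
        ∃ z, z ∈ sumSet T T' ∩ J ∧ z ≠ 0 := by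
  classical
  set P : Set (Set R) := {T' | IsGradedRightIdeal 𝒜 T' ∧ ∀ x ∈ T, x ∈ T' → x = 0} with hP
  have h0 : ({0} : Set R) ∈ P := by
    constructor
    · refine ⟨⟨rfl, ?_, ?_⟩, ?_⟩
      · rintro x rfl y rfl; simp
      · rintro x rfl r; simp
      · rintro x rfl γ; simp [Dc_zero]
    · rintro x - rfl; rfl
  obtain ⟨M, hMmax⟩ : ∃ M, Maximal (· ∈ P) M := by
    apply zorn_subset
    intro c hcP hchain
    rcases Set.eq_empty_or_nonempty c with rfl | hne
    · exact ⟨{0}, h0, by simp⟩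
    refine ⟨⋃₀ c, ⟨⟨⟨?_, ?_, ?_⟩, ?_⟩, ?_⟩, fun s hs => Set.subset_sUnion_of_mem hs⟩
    · obtain ⟨s, hs⟩ := hne
      exact ⟨s, hs, (hcP hs).1.1.1⟩
    · rintro x ⟨s, hs, hxs⟩ y ⟨t, ht, hyt⟩
      rcases hchain.total hs ht with h | h
      · exact ⟨t, ht, (hcP ht).1.1.2.1 x (h hxs) y hyt⟩
      · exact ⟨s, hs, (hcP hs).1.1.2.1 x hxs y (h hyt)⟩
    · rintro x ⟨s, hs, hxs⟩ r
      exact ⟨s, hs, (hcP hs).1.1.2.2 x hxs r⟩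
    · rintro x ⟨s, hs, hxs⟩ γ
      exact ⟨s, hs, (hcP hs).1.2 x hxs γ⟩
    · rintro x hxT ⟨s, hs, hxs⟩
      exact (hcP hs).2 x hxT hxs
  obtain ⟨⟨hMgr, hMdisj⟩, hMmax'⟩ := hMmax
  refine ⟨M, hMgr, hMdisj, ?_⟩
  rintro J hJ ⟨x0, hx0J, hx0ne⟩
  by_contra hcon
  push_neg at hcon
  have hJM : J ⊆ M := by
    have hMJ : sumSet M J ∈ P := by
      constructor
      · exact grIdeal_sumSet 𝒜 hMgr hJ
      · rintro x hxT ⟨m, hm, j, hj, rfl⟩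
        have hjTM : j ∈ sumSet T M := ⟨m + j, hxT, -m, grIdeal_neg 𝒜 hMgr hm, by abel⟩
        have hj0 : j = 0 := hcon j ⟨hjTM, hj⟩
        rw [hj0, add_zero]
        rw [hj0, add_zero] at hxT
        exact hMdisj m hxT hm
    have hsub : M ⊆ sumSet M J := fun m hm => ⟨m, hm, 0, hJ.1.1, (add_zero m).symm⟩
    have hMeq := hMmax' hMJ hsub
    intro j hj
    exact hMeq ⟨0, hMgr.1.1, j, hj, (zero_add j).symm⟩
  exact hx0ne (hcon x0 ⟨⟨0, hT.1.1, x0, hJM hx0J, (zero_add x0).symm⟩, hx0J⟩)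

/-- Graded nonsingularity. -/
lemma gr_nonsing (hreg : GradedVNRegular 𝒜) {E : Set R} (hEess : ∀ J : Set R,
      IsGradedRightIdeal 𝒜 J → (∃ x ∈ J, x ≠ 0) → ∃ z, z ∈ E ∩ J ∧ z ≠ 0)
    (hEgr : IsGradedRightIdeal 𝒜 E)
    {x : R} (hx : ∀ v ∈ E, x * v = 0) : x = 0 := by
  have homog : ∀ (γ : ι) (w : R), w ∈ 𝒜 γ → (∀ v ∈ E, w * v = 0) → w = 0 := by
    intro γ w hwγ hwE
    by_contra hwne
    obtain ⟨b, hb, hwbw⟩ := hom_reg 𝒜 hreg hwγ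
    have hf'mem : b * w ∈ 𝒜 (-γ + γ) := SetLike.mul_mem_graded hb hwγ
    rw [neg_add_cancel] at hf'mem
    have hf'ne : b * w ≠ 0 := by
      intro h
      apply hwne
      calc w = w * b * w := hwbw.symm
        _ = w * (b * w) := by rw [mul_assoc]
        _ = 0 := by rw [h, mul_zero]
    obtain ⟨z, ⟨hzE, hzJ⟩, hzne⟩ := hEess (pIdeal (b * w)) (pIdeal_graded 𝒜 hf'mem)
      ⟨b * w, self_mem_pIdeal _, hf'ne⟩
    obtain ⟨s, rfl⟩ := hzJ
    apply hzne
    have h1 : w * (b * w * s) = w * s := by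
      rw [← mul_assoc, ← mul_assoc, hwbw]
    have h2 : w * s = 0 := by rw [← h1]; exact hwE _ hzE
    rw [mul_assoc, h2, mul_zero]
  have hcomp : ∀ γ : ι, Dc 𝒜 γ x = 0 := by
    intro γ
    apply homog γ _ (Dc_mem 𝒜 γ x)
    intro v hv
    obtain ⟨s, hs⟩ := Dc_sum 𝒜 v
    rw [hs, Finset.mul_sum]
    apply Finset.sum_eq_zero
    intro δ _
    have hvδ : x * Dc 𝒜 δ v = 0 := hx _ (hEgr.2 v hv δ)
    have := Dc_mul_right 𝒜 (Dc_mem 𝒜 δ v) γ x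
    rw [hvδ, Dc_zero] at this
    exact this.symm
  obtain ⟨s, hs⟩ := Dc_sum 𝒜 x
  rw [hs]
  exact Finset.sum_eq_zero fun γ _ => hcomp γ

/-- Closure idempotent: extension of the projection onto `T` along `T'`. -/
lemma gr_closure (hinj : GradedSelfInjective 𝒜) {T T' : Set R}
    (hT : IsGradedRightIdeal 𝒜 T) (hT' : IsGradedRightIdeal 𝒜 T')
    (hdisj : ∀ x ∈ T, x ∈ T' → x = 0) :
    ∃ u ∈ 𝒜 0, (∀ t ∈ T, u * t = t) ∧ ∀ t' ∈ T', u * t' = 0 := by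
  classical
  obtain ⟨φ, hφ⟩ : ∃ φ : R → R, ∀ x : R, ∀ t ∈ T, ∀ t' ∈ T', x = t + t' → φ x = t := by
    refine ⟨fun x => if h : ∃ p : R × R, p.1 ∈ T ∧ p.2 ∈ T' ∧ x = p.1 + p.2
      then h.choose.1 else 0, ?_⟩
    intro x t ht t' ht' hx
    have h : ∃ p : R × R, p.1 ∈ T ∧ p.2 ∈ T' ∧ x = p.1 + p.2 := ⟨(t, t'), ht, ht', hx⟩
    change (if h' : ∃ p : R × R, p.1 ∈ T ∧ p.2 ∈ T' ∧ x = p.1 + p.2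
      then h'.choose.1 else 0) = t
    rw [dif_pos h]
    obtain ⟨h1, h2, h3⟩ := h.choose_spec
    have h4 : h.choose.1 - t ∈ T := grIdeal_sub 𝒜 hT h1 ht
    have h5 : h.choose.1 - t = t' - h.choose.2 := by
      have h6 : h.choose.1 + h.choose.2 = t + t' := by rw [← h3, ← hx]
      have := sub_eq_sub_iff_add_eq_add.mpr (by rw [h6]; abel :
        h.choose.1 + h.choose.2 = t' + t)
      exact this
    have h7 : h.choose.1 - t ∈ T' := h5 ▸ grIdeal_sub 𝒜 hT' ht' h.choose_spec.2.1
    have h8 : h.choose.1 - t = 0 := hdisj _ h4 h7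
    rw [sub_eq_zero] at h8
    exact h8
  have hS := grIdeal_sumSet 𝒜 hT hT'
  have hadd : ∀ x ∈ sumSet T T', ∀ y ∈ sumSet T T', φ (x + y) = φ x + φ y := by
    rintro x ⟨a, ha, b, hb, rfl⟩ y ⟨a', ha', b', hb', rfl⟩
    rw [hφ _ a ha b hb rfl, hφ _ a' ha' b' hb' rfl,
      hφ (a + b + (a' + b')) (a + a') (hT.1.2.1 a ha a' ha')
        (b + b') (hT'.1.2.1 b hb b' hb') (by abel)]
  have hlin : ∀ x ∈ sumSet T T', ∀ r : R, φ (x * r) = φ x * r := by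
    rintro x ⟨a, ha, b, hb, rfl⟩ r
    rw [hφ _ a ha b hb rfl,
      hφ ((a + b) * r) (a * r) (hT.1.2.2 a ha r) (b * r) (hT'.1.2.2 b hb r) (add_mul a b r)]
  have hdeg : ∀ δ : ι, ∀ x ∈ sumSet T T', x ∈ 𝒜 δ → φ x ∈ 𝒜 ((0 : ι) + δ) := by
    rintro δ x ⟨a, ha, b, hb, rfl⟩ hxδ
    have ha0 : Dc 𝒜 δ a ∈ T := hT.2 a ha δ
    have hb0 : Dc 𝒜 δ b ∈ T' := hT'.2 b hb δ
    have hdec : a + b = Dc 𝒜 δ a + Dc 𝒜 δ b := by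
      rw [← Dc_add]
      exact (Dc_same 𝒜 hxδ).symm
    rw [hφ _ _ ha0 _ hb0 hdec, zero_add]
    exact Dc_mem 𝒜 δ a
  obtain ⟨c, hc0, hc⟩ := hinj (sumSet T T') hS 0 φ hadd hlin hdeg
  refine ⟨c, hc0, ?_, ?_⟩
  · intro t ht
    have hmem : t ∈ sumSet T T' := ⟨t, ht, 0, hT'.1.1, (add_zero t).symm⟩
    have h1 := hc t hmem
    rw [hφ t t ht 0 hT'.1.1 (add_zero t).symm] at h1
    exact h1.symm
  · intro t' ht'
    have hmem : t' ∈ sumSet T T' := ⟨0, hT.1.1, t', ht', (zero_add t').symm⟩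
    have h1 := hc t' hmem
    rw [hφ t' 0 hT.1.1 t' ht' (zero_add t').symm] at h1
    exact h1.symm

/-- The two-sided ideal generated by `f₀`. -/
def tsm (f₀ : R) (l : List (R × R)) : R := (l.map fun p : R × R => p.1 * f₀ * p.2).sum

def Tset (f₀ : R) : Set R := {y | ∃ l : List (R × R), y = tsm f₀ l}

lemma tsm_append (f₀ : R) (l1 l2 : List (R × R)) :
    tsm f₀ (l1 ++ l2) = tsm f₀ l1 + tsm f₀ l2 := by simp [tsm]

lemma Tset_zero (f₀ : R) : (0 : R) ∈ Tset f₀ := ⟨[], rfl⟩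

lemma Tset_add {f₀ x y : R} (hx : x ∈ Tset f₀) (hy : y ∈ Tset f₀) : x + y ∈ Tset f₀ := by
  obtain ⟨l1, rfl⟩ := hx
  obtain ⟨l2, rfl⟩ := hy
  exact ⟨l1 ++ l2, (tsm_append f₀ l1 l2).symm⟩

lemma Tset_mul_right {f₀ x : R} (hx : x ∈ Tset f₀) (r : R) : x * r ∈ Tset f₀ := by
  obtain ⟨l, rfl⟩ := hx
  refine ⟨l.map fun p => (p.1, p.2 * r), ?_⟩
  unfold tsm
  induction l with
  | nil => simp
  | cons p l ih => simp only [List.map_cons, List.sum_cons, add_mul, mul_assoc] at *; rw [ih]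

lemma Tset_mul_left {f₀ x : R} (hx : x ∈ Tset f₀) (r : R) : r * x ∈ Tset f₀ := by
  obtain ⟨l, rfl⟩ := hx
  refine ⟨l.map fun p => (r * p.1, p.2), ?_⟩
  unfold tsm
  induction l with
  | nil => simp
  | cons p l ih => simp only [List.map_cons, List.sum_cons, mul_add, mul_assoc] at *; rw [ih]

lemma Tset_basic (f₀ a b : R) : a * f₀ * b ∈ Tset f₀ := ⟨[(a, b)], by simp [tsm]⟩

lemma Tset_self {f₀ : R} : f₀ ∈ Tset f₀ := by
  have := Tset_basic f₀ 1 1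
  rwa [one_mul, mul_one] at this

lemma Tset_graded {f₀ : R} (hf0 : f₀ ∈ 𝒜 0) : IsGradedRightIdeal 𝒜 (Tset f₀) := by
  refine ⟨⟨Tset_zero f₀, fun x hx y hy => Tset_add hx hy, fun x hx r => Tset_mul_right hx r⟩, ?_⟩
  intro x hx γ
  obtain ⟨l, rfl⟩ := hx
  unfold tsm
  induction l with
  | nil => simpa [Dc_zero] using Tset_zero f₀
  | cons p l ih =>
    simp only [List.map_cons, List.sum_cons]
    change Dc 𝒜 γ (p.1 * f₀ * p.2 + (List.map (fun p : R × R => p.1 * f₀ * p.2) l).sum)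
      ∈ Tset f₀
    rw [Dc_add]
    apply Tset_add _ ih
    -- component of a single term p.1 * f₀ * p.2
    obtain ⟨s, hs⟩ := Dc_sum 𝒜 p.1
    have hterm : p.1 * f₀ * p.2 = ∑ σ ∈ s, Dc 𝒜 σ p.1 * f₀ * p.2 := by
      rw [← Finset.sum_mul, ← Finset.sum_mul, ← hs]
    rw [hterm, Dc_finsum]
    apply Finset.sum_induction _ (· ∈ Tset f₀) (fun a b ha hb => Tset_add ha hb) (Tset_zero f₀)
    intro σ _
    have h1 : Dc 𝒜 σ p.1 * f₀ * p.2 = Dc 𝒜 σ p.1 * (f₀ * p.2) := by rw [mul_assoc]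
    rw [h1, Dc_mul_left' 𝒜 (Dc_mem 𝒜 σ p.1) γ, Dc_mul_zero_left 𝒜 hf0, ← mul_assoc]
    exact Tset_basic f₀ _ _

/-- Central cover of an idempotent `f₀ ∈ 𝒜 0`. -/
lemma central_cover (hreg : GradedVNRegular 𝒜) (hinj : GradedSelfInjective 𝒜)
    {f₀ : R} (hf00 : f₀ ∈ 𝒜 0) :
    ∃ u, u ∈ 𝒜 0 ∧ u * u = u ∧ (∀ r : R, u * r = r * u) ∧ u * f₀ = f₀ ∧
      ∀ z : R, (∀ r : R, z * (r * f₀) = 0) → z * u = 0 := by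
  have hTgr := Tset_graded 𝒜 hf00
  obtain ⟨T', hT'gr, hdisj, hess⟩ := exists_gr_complement 𝒜 hTgr
  obtain ⟨u, hu0, hut, hut'⟩ := gr_closure 𝒜 hinj hTgr hT'gr hdisj
  have hEgr := grIdeal_sumSet 𝒜 hTgr hT'gr
  have key : ∀ w : R, (∀ t ∈ Tset f₀, w * t = 0) → (∀ t' ∈ T', w * t' = 0) → w = 0 := by
    intro w h1 h2
    apply gr_nonsing 𝒜 hreg hess hEgr
    rintro v ⟨a, ha, b, hb, rfl⟩
    rw [mul_add, h1 a ha, h2 b hb, add_zero]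
  have huu : u * u = u := by
    have := key (u * u - u) ?_ ?_
    · rwa [sub_eq_zero] at this
    · intro t ht
      rw [sub_mul, mul_assoc, hut t ht, hut t ht, sub_self]
    · intro t' ht'
      rw [sub_mul, mul_assoc, hut' t' ht', mul_zero, sub_self]
  have step3 : ∀ r : R, r * u = u * (r * u) := by
    intro r
    have := key (r * u - u * (r * u)) ?_ ?_
    · rwa [sub_eq_zero] at this
    · intro t ht
      have e1 : r * u * t = r * t := by rw [mul_assoc, hut t ht]
      have e2 : u * (r * u) * t = r * t := by
        rw [mul_assoc, mul_assoc, hut t ht, hut _ (Tset_mul_left ht r)]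
      rw [sub_mul, e1, e2, sub_self]
    · intro t' ht'
      have e1 : r * u * t' = 0 := by rw [mul_assoc, hut' t' ht', mul_zero]
      have e2 : u * (r * u) * t' = 0 := by
        rw [mul_assoc, mul_assoc, hut' t' ht', mul_zero, mul_zero]
      rw [sub_mul, e1, e2, sub_self]
  have step4h : ∀ (σ : ι) (r : R), r ∈ 𝒜 σ → u * r = u * r * u := by
    intro σ r hrσ
    by_contra hne
    have hvne : u * r - u * r * u ≠ 0 := sub_ne_zero.mpr hne
    obtain ⟨v, hv⟩ : ∃ v : R, v = u * r - u * r * u := ⟨_, rfl⟩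
    rw [← hv] at hvne
    have hvσ : v ∈ 𝒜 σ := by
      rw [hv]
      have h1 : u * r ∈ 𝒜 (0 + σ) := SetLike.mul_mem_graded hu0 hrσ
      rw [zero_add] at h1
      have h2 : u * r * u ∈ 𝒜 (σ + 0) := SetLike.mul_mem_graded h1 hu0
      rw [add_zero] at h2
      exact sub_mem h1 h2
    have hvT : ∀ t ∈ Tset f₀, v * t = 0 := by
      intro t ht
      have e1 : u * r * t = r * t := by
        rw [mul_assoc, hut _ (Tset_mul_left ht r)]
      have e2 : u * r * u * t = r * t := by
        rw [mul_assoc, hut t ht, e1]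
      rw [hv, sub_mul, e1, e2, sub_self]
    have huv : u * v = v := by
      rw [hv, mul_sub, ← mul_assoc, ← mul_assoc, ← mul_assoc, huu]
    -- find a nonzero homogeneous element of (vR) ∩ T
    obtain ⟨z, ⟨hzE, hzJ⟩, hzne⟩ := hess (pIdeal v) (pIdeal_graded 𝒜 hvσ)
      ⟨v, self_mem_pIdeal v, hvne⟩
    have hzT : z ∈ Tset f₀ := by
      obtain ⟨a, ha, b, hb, hzab⟩ := hzE
      obtain ⟨s, hzs⟩ := hzJ
      have huz : u * z = z := by
        rw [hzs, ← mul_assoc, huv]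
      have huz2 : u * z = a := by
        rw [hzab, mul_add, hut a ha, hut' b hb, add_zero]
      have hza : z = a := by rw [← huz, huz2]
      rw [hza]
      exact ha
    obtain ⟨w, τ, ⟨hwJ, hwT⟩, hwτ, hwne⟩ := grIdeal_homog_elt 𝒜
      (grIdeal_inter 𝒜 (pIdeal_graded 𝒜 hvσ) hTgr) (⟨hzJ, hzT⟩ : z ∈ pIdeal v ∩ Tset f₀) hzne
    obtain ⟨b2, hb2, hwbw⟩ := hom_reg 𝒜 hreg hwτ
    obtain ⟨s', hws'⟩ := hwJ
    apply hwne
    have hsbw : s' * (b2 * w) ∈ Tset f₀ := Tset_mul_left (Tset_mul_left hwT b2) s'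
    have h9 : v * (s' * (b2 * w)) = w := by
      rw [← mul_assoc, ← hws', ← mul_assoc, hwbw]
    exact h9.symm.trans (hvT _ hsbw)
  have step4 : ∀ r : R, u * r = u * r * u := by
    intro r
    obtain ⟨s, hs⟩ := Dc_sum 𝒜 r
    calc u * r = u * ∑ γ ∈ s, Dc 𝒜 γ r := by rw [← hs]
      _ = ∑ γ ∈ s, u * Dc 𝒜 γ r := Finset.mul_sum _ _ _
      _ = ∑ γ ∈ s, u * Dc 𝒜 γ r * u :=
          Finset.sum_congr rfl fun γ _ => step4h γ _ (Dc_mem 𝒜 γ r)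
      _ = (∑ γ ∈ s, u * Dc 𝒜 γ r) * u := (Finset.sum_mul _ _ _).symm
      _ = u * (∑ γ ∈ s, Dc 𝒜 γ r) * u := by rw [Finset.mul_sum]
      _ = u * r * u := by rw [← hs]
  have hcentral : ∀ r : R, u * r = r * u := by
    intro r
    rw [step4 r, mul_assoc, ← step3]
  have huf : u * f₀ = f₀ := hut f₀ Tset_self
  refine ⟨u, hu0, huu, hcentral, huf, ?_⟩
  intro z hz
  have hzT : ∀ l : List (R × R), z * tsm f₀ l = 0 := by
    intro l
    induction l with
    | nil => simp [tsm]
    | cons p l ih =>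
      have hc : tsm f₀ (p :: l) = p.1 * f₀ * p.2 + tsm f₀ l := by simp [tsm]
      rw [hc, mul_add, ih, add_zero, ← mul_assoc, hz p.1, zero_mul]
  apply key
  · intro t ht
    obtain ⟨l, rfl⟩ := ht
    rw [mul_assoc, hut _ ⟨l, rfl⟩, hzT l]
  · intro t' ht'
    rw [mul_assoc, hut' t' ht', mul_zero]

/-- Every nonzero graded right ideal contains a nonzero graded abelian idempotent. -/
lemma grIdeal_abelian (hreg : GradedVNRegular 𝒜) (hinj : GradedSelfInjective 𝒜)
    {e : R} (he0 : e ∈ 𝒜 0) (hfa : GrFaithfulIdem 𝒜 e) (hab : GrAbelianIdem 𝒜 e)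
    {J : Set R} (hJ : IsGradedRightIdeal 𝒜 J) {x0 : R} (hx0 : x0 ∈ J) (hx0ne : x0 ≠ 0) :
    ∃ f, f ∈ J ∧ f ≠ 0 ∧ f ∈ 𝒜 0 ∧ f * f = f ∧
      ∀ h : R, IsHomog 𝒜 h → f * h * f = h → h * h = h →
        ∀ x : R, f * x * f = x → h * x = x * h := by
  have hee : e * e = e := hab.1.2
  obtain ⟨w, τ, hwJ, hwτ, hwne⟩ := grIdeal_homog_elt 𝒜 hJ hx0 hx0ne
  obtain ⟨b, hb, hwbw⟩ := hom_reg 𝒜 hreg hwτ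
  obtain ⟨f₀, hf₀⟩ : ∃ f₀ : R, f₀ = w * b := ⟨_, rfl⟩
  have hf0J : f₀ ∈ J := hf₀ ▸ hJ.1.2.2 w hwJ b
  have hf0w : f₀ * w = w := by rw [hf₀]; exact hwbw
  have hf0f0 : f₀ * f₀ = f₀ := by rw [hf₀, ← mul_assoc, hwbw]
  have hf0ne : f₀ ≠ 0 := fun h => hwne (by rw [← hf0w, h, zero_mul])
  have hf0mem : f₀ ∈ 𝒜 0 := by
    have h1 := SetLike.mul_mem_graded hwτ hb
    rw [add_neg_cancel] at h1
    exact hf₀ ▸ h1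
  -- there is r with e * (r * f₀) ≠ 0, using graded faithfulness via the central cover
  have hstep : ∃ r : R, e * (r * f₀) ≠ 0 := by
    by_contra hcon
    push_neg at hcon
    obtain ⟨u, hu0, huu, hucen, huf, huann⟩ := central_cover 𝒜 hreg hinj hf0mem
    have hue : e * u = 0 := huann e hcon
    have hune : u ≠ 0 := fun h => hf0ne (by rw [← huf, h, zero_mul])
    exact hune (hfa.2 u ⟨0, hu0⟩ huu hucen hue)
  obtain ⟨r, hr⟩ := hstep
  have hcomp : ∃ γ, e * (Dc 𝒜 γ r * f₀) ≠ 0 := by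
    by_contra hcon
    push_neg at hcon
    apply hr
    obtain ⟨s, hs⟩ := Dc_sum 𝒜 r
    calc e * (r * f₀) = e * ((∑ γ ∈ s, Dc 𝒜 γ r) * f₀) := by rw [← hs]
      _ = ∑ γ ∈ s, e * (Dc 𝒜 γ r * f₀) := by rw [Finset.sum_mul, Finset.mul_sum]
      _ = 0 := Finset.sum_eq_zero fun γ _ => hcon γ
  obtain ⟨γ, hγ⟩ := hcomp
  obtain ⟨t, htdef⟩ : ∃ t : R, t = e * (Dc 𝒜 γ r * f₀) := ⟨_, rfl⟩
  have htne : t ≠ 0 := fun h => hγ (h ▸ htdef ▸ rfl)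
  have htγ : t ∈ 𝒜 γ := by
    rw [htdef]
    have h1 : Dc 𝒜 γ r * f₀ ∈ 𝒜 (γ + 0) := SetLike.mul_mem_graded (Dc_mem 𝒜 γ r) hf0mem
    rw [add_zero] at h1
    have h2 : e * (Dc 𝒜 γ r * f₀) ∈ 𝒜 ((0 : ι) + γ) := SetLike.mul_mem_graded he0 h1
    rwa [zero_add] at h2
  have het : e * t = t := by rw [htdef, ← mul_assoc, hee]
  have htf0 : t * f₀ = t := by
    rw [htdef, mul_assoc, mul_assoc, hf0f0]
  obtain ⟨b2, hb2, htbt⟩ := hom_reg 𝒜 hreg htγ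
  obtain ⟨b', hb'def⟩ : ∃ b' : R, b' = f₀ * b2 * e := ⟨_, rfl⟩
  have hb'mem : b' ∈ 𝒜 (-γ) := by
    rw [hb'def]
    have h1 : f₀ * b2 ∈ 𝒜 ((0 : ι) + -γ) := SetLike.mul_mem_graded hf0mem hb2
    rw [zero_add] at h1
    have h2 : f₀ * b2 * e ∈ 𝒜 (-γ + 0) := SetLike.mul_mem_graded h1 he0
    rwa [add_zero] at h2
  have htb' : t * b' = t * b2 * e := by
    rw [hb'def, ← mul_assoc, ← mul_assoc, htf0]
  have htb't : t * b' * t = t := by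
    rw [htb', mul_assoc, het, htbt]
  obtain ⟨f', hf'def⟩ : ∃ f' : R, f' = b' * t := ⟨_, rfl⟩
  have hff0 : f' ∈ 𝒜 0 := by
    rw [hf'def]
    have h1 : b' * t ∈ 𝒜 (-γ + γ) := SetLike.mul_mem_graded hb'mem htγ
    rwa [neg_add_cancel] at h1
  have hffidem : f' * f' = f' := by
    rw [hf'def, mul_assoc, ← mul_assoc t b' t, htb't]
  have htf' : t * f' = t := by
    rw [hf'def, ← mul_assoc, htb't]
  have hffne : f' ≠ 0 := fun h => htne (by rw [← htf', h, mul_zero])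
  have hf0b' : f₀ * b' = b' := by
    rw [hb'def, ← mul_assoc, ← mul_assoc, hf0f0]
  have hf0f' : f₀ * f' = f' := by
    rw [hf'def, ← mul_assoc, hf0b']
  have hf'J : f' ∈ J := by
    rw [← hf0f']
    exact hJ.1.2.2 f₀ hf0J f'
  have hb'e : b' * e = b' := by
    rw [hb'def, mul_assoc, hee]
  refine ⟨f', hf'J, hffne, hff0, hffidem, ?_⟩
  intro h hh hfhf hhh x hfxf
  have hf'h : f' * h = h := by
    conv_lhs => rw [← hfhf]
    rw [← mul_assoc, ← mul_assoc, hffidem, hfhf]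
  have hhf' : h * f' = h := by
    conv_lhs => rw [← hfhf]
    rw [mul_assoc, hffidem, hfhf]
  have hf'x : f' * x = x := by
    conv_lhs => rw [← hfxf]
    rw [← mul_assoc, ← mul_assoc, hffidem, hfxf]
  have hxf' : x * f' = x := by
    conv_lhs => rw [← hfxf]
    rw [mul_assoc, hffidem, hfxf]
  -- transport to the corner of e
  have heH : ∀ w1 : R, e * (t * w1 * b') = t * w1 * b' := by
    intro w1
    rw [← mul_assoc, ← mul_assoc, het]
  have hHe : ∀ w1 : R, t * w1 * b' * e = t * w1 * b' := by
    intro w1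
    rw [mul_assoc (t * w1) b' e, hb'e]
  have hA1 : ∀ w1 : R, f' * w1 = w1 → b' * (t * w1 * b') = w1 * b' := by
    intro w1 hw1
    calc b' * (t * w1 * b') = b' * (t * (w1 * b')) := by rw [mul_assoc t w1 b']
      _ = b' * t * (w1 * b') := by rw [← mul_assoc]
      _ = f' * (w1 * b') := by rw [← hf'def]
      _ = f' * w1 * b' := by rw [← mul_assoc]
      _ = w1 * b' := by rw [hw1]
  have hA2 : ∀ w1 : R, w1 * f' = w1 → t * w1 * b' * t = t * w1 := by
    intro w1 hw1
    calc t * w1 * b' * t = t * w1 * (b' * t) := by rw [mul_assoc]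
      _ = t * w1 * f' := by rw [← hf'def]
      _ = t * (w1 * f') := by rw [mul_assoc]
      _ = t * w1 := by rw [hw1]
  have hHH : t * h * b' * (t * h * b') = t * h * b' := by
    calc t * h * b' * (t * h * b') = t * h * b' * t * (h * b') := by
          simp only [mul_assoc]
      _ = t * h * (h * b') := by rw [hA2 h hhf']
      _ = t * (h * h) * b' := by simp only [mul_assoc]
      _ = t * h * b' := by rw [hhh]
  have hHhom : IsHomog 𝒜 (t * h * b') := by
    obtain ⟨δh, hδh⟩ := hh
    exact ⟨γ + δh + -γ, SetLike.mul_mem_graded (SetLike.mul_mem_graded htγ hδh) hb'mem⟩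
  have hcomm : t * h * b' * (t * x * b') = t * x * b' * (t * h * b') := by
    refine hab.2 (t * h * b') hHhom ?_ hHH (t * x * b') ?_
    · rw [heH h, hHe h]
    · rw [heH x, hHe x]
  -- recover h * x = x * h
  have hrec : ∀ w1 w2 : R, f' * w1 = w1 → w2 * f' = w2 → f' * w2 = w2 →
      b' * (t * w1 * b' * (t * w2 * b')) * t = w1 * w2 := by
    intro w1 w2 hw1 hw2 hw2'
    calc b' * (t * w1 * b' * (t * w2 * b')) * t
        = b' * (t * w1 * b') * (t * w2 * b' * t) := by
          simp only [mul_assoc]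
      _ = w1 * b' * (t * w2) := by rw [hA1 w1 hw1, hA2 w2 hw2]
      _ = w1 * (b' * t) * w2 := by simp only [mul_assoc]
      _ = w1 * f' * w2 := by rw [← hf'def]
      _ = w1 * (f' * w2) := by rw [mul_assoc]
      _ = w1 * w2 := by rw [hw2']
  have h1 := hrec h x hf'h hxf' hf'x
  have h2 := hrec x h hf'x hhf' hf'h
  rw [hcomm] at h1
  rw [h2] at h1
  exact h1.symm

/-- In the corner of a nonzero `y ∈ 𝒜 0` there is a nonzero abelian idempotent of `R₀`. -/
lemma exists_corner_abelian (hreg : GradedVNRegular 𝒜) (hinj : GradedSelfInjective 𝒜)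
    {e : R} (he0 : e ∈ 𝒜 0) (hfa : GrFaithfulIdem 𝒜 e) (hab : GrAbelianIdem 𝒜 e)
    {y : R} (hy0 : y ∈ 𝒜 0) (hyne : y ≠ 0) :
    ∃ f r₀, r₀ ∈ 𝒜 0 ∧ f = y * r₀ ∧ f ≠ 0 ∧ f ∈ 𝒜 0 ∧ f * f = f ∧
      ∀ h ∈ 𝒜 (0 : ι), f * h * f = h → h * h = h →
        ∀ x : R, f * x * f = x → h * x = x * h := by
  obtain ⟨f, hfJ, hfne, hf0, hff, habf⟩ := grIdeal_abelian 𝒜 hreg hinj he0 hfa hab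
    (pIdeal_graded 𝒜 hy0) (self_mem_pIdeal y) hyne
  obtain ⟨r, hr⟩ := hfJ
  refine ⟨f, Dc 𝒜 0 r, Dc_mem 𝒜 0 r, ?_, hfne, hf0, hff, ?_⟩
  · rw [← Dc_same 𝒜 hf0, hr, Dc_mul_zero_left 𝒜 hy0]
  · intro h hh0 hfhf hhh x hfxf
    exact habf h ⟨0, hh0⟩ hfhf hhh x hfxf

lemma mem0_mul {a b : R} (ha : a ∈ 𝒜 0) (hb : b ∈ 𝒜 0) : a * b ∈ 𝒜 (0 : ι) := by
  have := SetLike.mul_mem_graded ha hb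
  rwa [zero_add] at this

def pzIdeal (x : R) : Set R := {w | ∃ s ∈ 𝒜 (0 : ι), w = x * s}

lemma pzIdeal_ideal {x : R} (hx : x ∈ 𝒜 0) : IsRightIdealOfZero 𝒜 (pzIdeal 𝒜 x) := by
  refine ⟨?_, ⟨0, zero_mem _, (mul_zero x).symm⟩, ?_, ?_⟩
  · rintro _ ⟨s, hs, rfl⟩
    exact mem0_mul 𝒜 hx hs
  · rintro a ⟨s, hs, rfl⟩ b ⟨s', hs', rfl⟩
    exact ⟨s + s', add_mem hs hs', (mul_add x s s').symm⟩
  · rintro a ⟨s, hs, rfl⟩ r hr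
    exact ⟨s * r, mem0_mul 𝒜 hs hr, mul_assoc x s r⟩

lemma self_mem_pzIdeal {x : R} (hx : x ∈ 𝒜 0) : x ∈ pzIdeal 𝒜 x :=
  ⟨1, one_mem_zero 𝒜, (mul_one x).symm⟩

lemma zIdeal_sumSet {A B : Set R} (hA : IsRightIdealOfZero 𝒜 A) (hB : IsRightIdealOfZero 𝒜 B) :
    IsRightIdealOfZero 𝒜 (sumSet A B) := by
  refine ⟨?_, ⟨0, hA.2.1, 0, hB.2.1, (add_zero 0).symm⟩, ?_, ?_⟩
  · rintro x ⟨a, ha, b, hb, rfl⟩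
    exact add_mem (hA.1 ha) (hB.1 hb)
  · rintro x ⟨a, ha, b, hb, rfl⟩ y ⟨a', ha', b', hb', rfl⟩
    exact ⟨a + a', hA.2.2.1 a ha a' ha', b + b', hB.2.2.1 b hb b' hb', by abel⟩
  · rintro x ⟨a, ha, b, hb, rfl⟩ r hr
    exact ⟨a * r, hA.2.2.2 a ha r hr, b * r, hB.2.2.2 b hb r hr, add_mul a b r⟩

/-- Complements for right ideals of `R₀`. -/
lemma exists_zero_complement {A : Set R} (hA : IsRightIdealOfZero 𝒜 A) :
    ∃ A' : Set R, IsRightIdealOfZero 𝒜 A' ∧ (∀ x ∈ A, x ∈ A' → x = 0) ∧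
      ∀ J : Set R, IsRightIdealOfZero 𝒜 J → (∃ x ∈ J, x ≠ 0) →
        ∃ z, z ∈ sumSet A A' ∩ J ∧ z ≠ 0 := by
  classical
  set P : Set (Set R) := {A' | IsRightIdealOfZero 𝒜 A' ∧ ∀ x ∈ A, x ∈ A' → x = 0} with hP
  have h0 : ({0} : Set R) ∈ P := by
    constructor
    · refine ⟨?_, rfl, ?_, ?_⟩
      · rintro x rfl; exact zero_mem _
      · rintro x rfl y rfl; simp
      · rintro x rfl r _; simp
    · rintro x - rfl; rfl
  obtain ⟨M, hMmax⟩ : ∃ M, Maximal (· ∈ P) M := by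
    apply zorn_subset
    intro c hcP hchain
    rcases Set.eq_empty_or_nonempty c with rfl | hne
    · exact ⟨{0}, h0, by simp⟩
    refine ⟨⋃₀ c, ⟨⟨?_, ?_, ?_, ?_⟩, ?_⟩, fun s hs => Set.subset_sUnion_of_mem hs⟩
    · rintro x ⟨s, hs, hxs⟩
      exact (hcP hs).1.1 hxs
    · obtain ⟨s, hs⟩ := hne
      exact ⟨s, hs, (hcP hs).1.2.1⟩
    · rintro x ⟨s, hs, hxs⟩ y ⟨t, ht, hyt⟩
      rcases hchain.total hs ht with h | h
      · exact ⟨t, ht, (hcP ht).1.2.2.1 x (h hxs) y hyt⟩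
      · exact ⟨s, hs, (hcP hs).1.2.2.1 x hxs y (h hyt)⟩
    · rintro x ⟨s, hs, hxs⟩ r hr
      exact ⟨s, hs, (hcP hs).1.2.2.2 x hxs r hr⟩
    · rintro x hxA ⟨s, hs, hxs⟩
      exact (hcP hs).2 x hxA hxs
  obtain ⟨⟨hMI, hMdisj⟩, hMmax'⟩ := hMmax
  refine ⟨M, hMI, hMdisj, ?_⟩
  rintro J hJ ⟨x0, hx0J, hx0ne⟩
  by_contra hcon
  push_neg at hcon
  have hJM : J ⊆ M := by
    have hMJ : sumSet M J ∈ P := by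
      constructor
      · exact zIdeal_sumSet 𝒜 hMI hJ
      · rintro x hxA ⟨m, hm, j, hj, rfl⟩
        have hjTM : j ∈ sumSet A M := ⟨m + j, hxA, -m, ideal_neg 𝒜 hMI hm, by abel⟩
        have hj0 : j = 0 := hcon j ⟨hjTM, hj⟩
        rw [hj0, add_zero]
        rw [hj0, add_zero] at hxA
        exact hMdisj m hxA hm
    have hsub : M ⊆ sumSet M J := fun m hm => ⟨m, hm, 0, hJ.2.1, (add_zero m).symm⟩
    have hMeq := hMmax' hMJ hsub
    intro j hj
    exact hMeq ⟨0, hMI.2.1, j, hj, (zero_add j).symm⟩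
  exact hx0ne (hcon x0 ⟨⟨0, hA.2.1, x0, hJM hx0J, (zero_add x0).symm⟩, hx0J⟩)

/-- Nonsingularity of `R₀`. -/
lemma zero_nonsing (hz : ZeroRegular 𝒜) {E : Set R}
    (hEess : ∀ J : Set R, IsRightIdealOfZero 𝒜 J → (∃ x ∈ J, x ≠ 0) →
      ∃ z, z ∈ E ∩ J ∧ z ≠ 0)
    {x : R} (hx0 : x ∈ 𝒜 0) (hx : ∀ v ∈ E, x * v = 0) : x = 0 := by
  by_contra hxne
  obtain ⟨b, hb0, hxbx⟩ := hz x hx0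
  have hf0 : b * x ∈ 𝒜 0 := mem0_mul 𝒜 hb0 hx0
  have hfne : b * x ≠ 0 := by
    intro h
    apply hxne
    calc x = x * b * x := hxbx.symm
      _ = x * (b * x) := mul_assoc x b x
      _ = 0 := by rw [h, mul_zero]
  obtain ⟨z, ⟨hzE, hzJ⟩, hzne⟩ := hEess (pzIdeal 𝒜 (b * x)) (pzIdeal_ideal 𝒜 hf0)
    ⟨b * x, self_mem_pzIdeal 𝒜 hf0, hfne⟩
  obtain ⟨s, hs0, rfl⟩ := hzJ
  apply hzne
  have h1 : x * (b * x * s) = x * s := by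
    rw [← mul_assoc, ← mul_assoc, hxbx]
  have h2 : x * s = 0 := by rw [← h1]; exact hx _ hzE
  rw [mul_assoc, h2, mul_zero]

/-- The right ideal of `R₀` generated by a family of idempotents, with grouped
representations. -/
def Aset (F : Set R) : Set R :=
  {y | ∃ T : Finset R, ↑T ⊆ F ∧ ∃ c : R → R, (∀ f ∈ T, c f ∈ 𝒜 (0 : ι)) ∧
    y = ∑ f ∈ T, f * c f}

lemma Aset_ideal {F : Set R} (hF : ∀ f ∈ F, f ∈ 𝒜 (0 : ι)) :
    IsRightIdealOfZero 𝒜 (Aset 𝒜 F) := by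
  classical
  refine ⟨?_, ⟨∅, by simp, fun _ => 0, by simp, by simp⟩, ?_, ?_⟩
  · rintro y ⟨T, hTF, c, hc, rfl⟩
    exact sum_mem fun f hf => mem0_mul 𝒜 (hF f (hTF hf)) (hc f hf)
  · rintro y ⟨T1, hT1, c1, hc1, rfl⟩ y' ⟨T2, hT2, c2, hc2, rfl⟩
    refine ⟨T1 ∪ T2, by simp [hT1, hT2, Set.union_subset],
      fun f => (if f ∈ T1 then c1 f else 0) + (if f ∈ T2 then c2 f else 0), ?_, ?_⟩
    · intro f hf
      apply add_mem
      · split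
        · exact hc1 f ‹_›
        · exact zero_mem _
      · split
        · exact hc2 f ‹_›
        · exact zero_mem _
    · have hi1 : (T1 ∪ T2) ∩ T1 = T1 := by
        ext a; simp only [Finset.mem_inter, Finset.mem_union]; tauto
      have hi2 : (T1 ∪ T2) ∩ T2 = T2 := by
        ext a; simp only [Finset.mem_inter, Finset.mem_union]; tauto
      have e1 : ∑ f ∈ T1 ∪ T2, f * (if f ∈ T1 then c1 f else 0) =
          ∑ f ∈ T1, f * c1 f := by
        simp only [mul_ite, mul_zero]
        rw [Finset.sum_ite_mem, hi1]
      have e2 : ∑ f ∈ T1 ∪ T2, f * (if f ∈ T2 then c2 f else 0) =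
          ∑ f ∈ T2, f * c2 f := by
        simp only [mul_ite, mul_zero]
        rw [Finset.sum_ite_mem, hi2]
      rw [← e1, ← e2, ← Finset.sum_add_distrib]
      exact Finset.sum_congr rfl fun f _ => by rw [mul_add]
  · rintro y ⟨T, hTF, c, hc, rfl⟩ r hr
    refine ⟨T, hTF, fun f => c f * r, fun f hf => mem0_mul 𝒜 (hc f hf) hr, ?_⟩
    rw [Finset.sum_mul]
    exact Finset.sum_congr rfl fun f _ => mul_assoc f (c f) r

lemma mem_Aset {F : Set R} {f : R} (hf : f ∈ F) : f ∈ Aset 𝒜 F := by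
  classical
  exact ⟨{f}, by simpa using hf, fun _ => 1, by simp [one_mem_zero 𝒜],
    by simp⟩

/-- The main construction: a faithful abelian idempotent of `R₀`. -/
lemma typeI_zero (hreg : GradedVNRegular 𝒜) (hinj : GradedSelfInjective 𝒜)
    {e : R} (he0 : e ∈ 𝒜 0) (hfa : GrFaithfulIdem 𝒜 e) (hab : GrAbelianIdem 𝒜 e) :
    ∃ g : R, ZeroFaithfulIdem 𝒜 g ∧ ZeroAbelianIdem 𝒜 g := by
  classical
  have hz : ZeroRegular 𝒜 := zero_regular_of 𝒜 hreg
  have hzi : ZeroSelfInjective 𝒜 := zero_self_injective_of 𝒜 hreg hinj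
  set GoodS : Set (Set R) := {F | (∀ f ∈ F, f ≠ 0 ∧ f ∈ 𝒜 (0 : ι) ∧ f * f = f ∧
      ∀ h ∈ 𝒜 (0 : ι), f * h * f = h → h * h = h →
        ∀ x : R, f * x * f = x → h * x = x * h) ∧
    ∀ f ∈ F, ∀ f' ∈ F, f ≠ f' → ∀ s ∈ 𝒜 (0 : ι), f * s * f' = 0} with hGoodS
  obtain ⟨F, hFmax⟩ : ∃ F, Maximal (· ∈ GoodS) F := by
    apply zorn_subset
    intro c hcS hchain
    rcases Set.eq_empty_or_nonempty c with rfl | hne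
    · exact ⟨∅, ⟨by simp, by simp⟩, by simp⟩
    refine ⟨⋃₀ c, ⟨?_, ?_⟩, fun s hs => Set.subset_sUnion_of_mem hs⟩
    · rintro f ⟨s, hs, hfs⟩
      exact (hcS hs).1 f hfs
    · rintro f ⟨s, hs, hfs⟩ f' ⟨s', hs', hfs'⟩ hne' t ht
      rcases hchain.total hs hs' with h | h
      · exact (hcS hs').2 f (h hfs) f' hfs' hne' t ht
      · exact (hcS hs).2 f hfs f' (h hfs') hne' t ht
  obtain ⟨⟨hFgood, hFpair⟩, hFmax'⟩ := hFmax
  have hFmem0 : ∀ f ∈ F, f ∈ 𝒜 (0 : ι) := fun f hf => (hFgood f hf).2.1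
  have hFidem : ∀ f ∈ F, f * f = f := fun f hf => (hFgood f hf).2.2.1
  have horth : ∀ f ∈ F, ∀ f' ∈ F, f ≠ f' → f * f' = 0 := by
    intro f hf f' hf' hne
    have := hFpair f hf f' hf' hne 1 (one_mem_zero 𝒜)
    rwa [mul_one] at this
  have hAI : IsRightIdealOfZero 𝒜 (Aset 𝒜 F) := Aset_ideal 𝒜 hFmem0
  obtain ⟨A', hA'I, hdisj, hess⟩ := exists_zero_complement 𝒜 hAI
  have hsumI : IsRightIdealOfZero 𝒜 (sumSet (Aset 𝒜 F) A') := zIdeal_sumSet 𝒜 hAI hA'I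
  obtain ⟨φ, hφ⟩ : ∃ φ : R → R, ∀ x : R, ∀ t ∈ Aset 𝒜 F, ∀ t' ∈ A', x = t + t' → φ x = t := by
    refine ⟨fun x => if h : ∃ p : R × R, p.1 ∈ Aset 𝒜 F ∧ p.2 ∈ A' ∧ x = p.1 + p.2
      then h.choose.1 else 0, ?_⟩
    intro x t ht t' ht' hx
    have h : ∃ p : R × R, p.1 ∈ Aset 𝒜 F ∧ p.2 ∈ A' ∧ x = p.1 + p.2 := ⟨(t, t'), ht, ht', hx⟩
    change (if h' : ∃ p : R × R, p.1 ∈ Aset 𝒜 F ∧ p.2 ∈ A' ∧ x = p.1 + p.2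
      then h'.choose.1 else 0) = t
    rw [dif_pos h]
    obtain ⟨h1, h2, h3⟩ := h.choose_spec
    have h4 : h.choose.1 - t ∈ Aset 𝒜 F := ideal_sub 𝒜 hAI h1 ht
    have h5 : h.choose.1 - t = t' - h.choose.2 :=
      sub_eq_sub_iff_add_eq_add.mpr (by rw [(by rw [← h3, ← hx] :
        h.choose.1 + h.choose.2 = t + t')]; abel)
    have h7 : h.choose.1 - t ∈ A' := h5 ▸ ideal_sub 𝒜 hA'I ht' h.choose_spec.2.1
    have h8 : h.choose.1 - t = 0 := hdisj _ h4 h7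
    rw [sub_eq_zero] at h8
    exact h8
  have hφ0 : ∀ x ∈ sumSet (Aset 𝒜 F) A', φ x ∈ 𝒜 (0 : ι) := by
    rintro x ⟨a, ha, b, hb, rfl⟩
    rw [hφ _ a ha b hb rfl]
    exact hAI.1 ha
  have hφadd : ∀ x ∈ sumSet (Aset 𝒜 F) A', ∀ y ∈ sumSet (Aset 𝒜 F) A',
      φ (x + y) = φ x + φ y := by
    rintro x ⟨a, ha, b, hb, rfl⟩ y ⟨a', ha', b', hb', rfl⟩
    rw [hφ _ a ha b hb rfl, hφ _ a' ha' b' hb' rfl,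
      hφ (a + b + (a' + b')) (a + a') (hAI.2.2.1 a ha a' ha')
        (b + b') (hA'I.2.2.1 b hb b' hb') (by abel)]
  have hφlin : ∀ x ∈ sumSet (Aset 𝒜 F) A', ∀ r ∈ 𝒜 (0 : ι), φ (x * r) = φ x * r := by
    rintro x ⟨a, ha, b, hb, rfl⟩ r hr
    rw [hφ _ a ha b hb rfl, hφ ((a + b) * r) (a * r) (hAI.2.2.2 a ha r hr)
      (b * r) (hA'I.2.2.2 b hb r hr) (add_mul a b r)]
  obtain ⟨g, hg0, hgx⟩ := hzi (sumSet (Aset 𝒜 F) A') hsumI φ hφ0 hφadd hφlin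
  have hga : ∀ a ∈ Aset 𝒜 F, g * a = a := by
    intro a ha
    have hmem : a ∈ sumSet (Aset 𝒜 F) A' := ⟨a, ha, 0, hA'I.2.1, (add_zero a).symm⟩
    have h1 := hgx a hmem
    rw [hφ a a ha 0 hA'I.2.1 (add_zero a).symm] at h1
    exact h1.symm
  have hga' : ∀ a' ∈ A', g * a' = 0 := by
    intro a' ha'
    have hmem : a' ∈ sumSet (Aset 𝒜 F) A' := ⟨0, hAI.2.1, a', ha', (zero_add a').symm⟩
    have h1 := hgx a' hmem
    rw [hφ a' 0 hAI.2.1 a' ha' (zero_add a').symm] at h1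
    exact h1.symm
  have hnonsing : ∀ x ∈ 𝒜 (0 : ι), (∀ v ∈ sumSet (Aset 𝒜 F) A', x * v = 0) → x = 0 :=
    fun x hx0 hxv => zero_nonsing 𝒜 hz hess hx0 hxv
  have hgg : g * g = g := by
    have h0 : g * g - g ∈ 𝒜 (0 : ι) := sub_mem (mem0_mul 𝒜 hg0 hg0) hg0
    have := hnonsing (g * g - g) h0 ?_
    · rwa [sub_eq_zero] at this
    rintro v ⟨a, ha, b, hb, rfl⟩
    have h1 : g * (a + b) = a := by rw [mul_add, hga a ha, hga' b hb, add_zero]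
    have h2 : g * g * (a + b) = a := by rw [mul_assoc, h1, hga a ha]
    rw [sub_mul, h1, h2, sub_self]
  have hgf : ∀ f ∈ F, g * f = f := fun f hf => hga f (mem_Aset 𝒜 hf)
  have hannA : ∀ w : R, (∀ f ∈ F, w * f = 0) → ∀ a ∈ Aset 𝒜 F, w * a = 0 := by
    rintro w hw a ⟨T, hTF, c, hc, rfl⟩
    rw [Finset.mul_sum]
    apply Finset.sum_eq_zero
    intro f hf
    rw [← mul_assoc, hw f (hTF hf), zero_mul]
  have hinjR : ∀ w ∈ 𝒜 (0 : ι), w * g = w → (∀ f ∈ F, w * f = 0) → w = 0 := by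
    intro w hw0 hwg hwf
    apply hnonsing w hw0
    rintro v ⟨a, ha, b, hb, rfl⟩
    rw [mul_add, hannA w hwf a ha, ← hwg, mul_assoc, hga' b hb, mul_zero, add_zero]
  have hinjL : ∀ w ∈ 𝒜 (0 : ι), g * w = w → (∀ f ∈ F, f * w = 0) → w = 0 := by
    intro w hw0 hgw hfw
    by_contra hne
    obtain ⟨z, ⟨hzE, hzJ⟩, hzne⟩ := hess (pzIdeal 𝒜 w) (pzIdeal_ideal 𝒜 hw0)
      ⟨w, self_mem_pzIdeal 𝒜 hw0, hne⟩
    obtain ⟨s, hs0, hzs⟩ := hzJ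
    obtain ⟨a, ha, b, hb, hzab⟩ := hzE
    have hgz : g * z = z := by rw [hzs, ← mul_assoc, hgw]
    have hza : z = a := by rw [← hgz, hzab, mul_add, hga a ha, hga' b hb, add_zero]
    have hzA : z ∈ Aset 𝒜 F := hza ▸ ha
    obtain ⟨T, hTF, c, hc, hzT⟩ := hzA
    have hfz : ∀ f ∈ F, f * z = 0 := by
      intro f hf
      rw [hzs, ← mul_assoc, hfw f hf, zero_mul]
    apply hzne
    rw [hzT]
    apply Finset.sum_eq_zero
    intro f hf
    have hfF := hTF hf
    have hfzf : f * z = f * c f := by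
      rw [hzT, Finset.mul_sum]
      rw [Finset.sum_eq_single f (fun f' hf' hne' => by
        rw [← mul_assoc, horth f hfF f' (hTF hf') (Ne.symm hne'), zero_mul])
        (fun h => absurd hf h)]
      rw [← mul_assoc, hFidem f hfF]
    rw [← hfzf, hfz f hfF]
  have hcornerR : ∀ w ∈ 𝒜 (0 : ι), g * w = w → ∀ f ∈ F, w * f = f * (w * f) := by
    intro w hw0 hgw f hf
    have hf0' := hFmem0 f hf
    have hζ0 : w * f - f * (w * f) ∈ 𝒜 (0 : ι) :=
      sub_mem (mem0_mul 𝒜 hw0 hf0') (mem0_mul 𝒜 hf0' (mem0_mul 𝒜 hw0 hf0'))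
    have hres := hinjL (w * f - f * (w * f)) hζ0 ?_ ?_
    · rw [sub_eq_zero] at hres
      exact hres
    · rw [mul_sub, ← mul_assoc, hgw, ← mul_assoc, hgf f hf]
    · intro f' hf'
      by_cases hcase : f' = f
      · rw [hcase, mul_sub, ← mul_assoc f f (w * f), hFidem f hf, sub_self]
      · rw [mul_sub, ← mul_assoc, ← mul_assoc,
          hFpair f' hf' f hf hcase w hw0, horth f' hf' f hf hcase, zero_mul, sub_self]
  -- the abelian property of g
  have habel : ∀ h ∈ 𝒜 (0 : ι), g * h * g = h → h * h = h →
      ∀ x ∈ 𝒜 (0 : ι), g * x * g = x → h * x = x * h := by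
    intro h hh0 hghg hhh x hx0 hgxg
    have hgh : g * h = h := by
      conv_lhs => rw [← hghg]
      rw [← mul_assoc, ← mul_assoc, hgg, hghg]
    have hhg : h * g = h := by
      conv_lhs => rw [← hghg]
      rw [mul_assoc, hgg, hghg]
    have hgx : g * x = x := by
      conv_lhs => rw [← hgxg]
      rw [← mul_assoc, ← mul_assoc, hgg, hgxg]
    have hxg : x * g = x := by
      conv_lhs => rw [← hgxg]
      rw [mul_assoc, hgg, hgxg]
    have hkey : ∀ f ∈ F, h * x * f = x * h * f := by
      intro f hf
      have hf0' := hFmem0 f hf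
      have hff := hFidem f hf
      have hhf : h * f = f * (h * f) := hcornerR h hh0 hgh f hf
      have hxf : x * f = f * (x * f) := hcornerR x hx0 hgx f hf
      have abf := (hFgood f hf).2.2.2
      have hh'0 : h * f ∈ 𝒜 (0 : ι) := mem0_mul 𝒜 hh0 hf0'
      have hfh'f : f * (h * f) * f = h * f := by
        rw [← hhf, mul_assoc, hff]
      have hh'idem : h * f * (h * f) = h * f := by
        calc h * f * (h * f) = h * (f * (h * f)) := by simp only [mul_assoc]
          _ = h * (h * f) := by rw [← hhf]
          _ = h * h * f := by simp only [mul_assoc]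
          _ = h * f := by rw [hhh]
      have hfx'f : f * (x * f) * f = x * f := by
        rw [← hxf, mul_assoc, hff]
      have hcm : h * f * (x * f) = x * f * (h * f) := abf (h * f) hh'0 hfh'f hh'idem
        (x * f) hfx'f
      calc h * x * f = h * (x * f) := by simp only [mul_assoc]
        _ = h * (f * (x * f)) := by rw [← hxf]
        _ = h * f * (x * f) := by simp only [mul_assoc]
        _ = x * f * (h * f) := hcm
        _ = x * (f * (h * f)) := by simp only [mul_assoc]
        _ = x * (h * f) := by rw [← hhf]
        _ = x * h * f := by simp only [mul_assoc]
    have hw0 : h * x - x * h ∈ 𝒜 (0 : ι) := sub_mem (mem0_mul 𝒜 hh0 hx0) (mem0_mul 𝒜 hx0 hh0)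
    have hwg : (h * x - x * h) * g = h * x - x * h := by
      rw [sub_mul, mul_assoc, hxg, mul_assoc, hhg]
    have hres := hinjR (h * x - x * h) hw0 hwg
      (fun f hf => by rw [sub_mul, hkey f hf, sub_self])
    rw [sub_eq_zero] at hres
    exact hres
  -- the faithfulness of g
  have hfaith : ∀ y ∈ 𝒜 (0 : ι), y * y = y → (∀ r ∈ 𝒜 (0 : ι), y * r = r * y) →
      g * y = 0 → y = 0 := by
    intro y hy0 hyy hycen hgy
    by_contra hyne
    obtain ⟨f', r₀, hr₀0, hf'def, hf'ne, hf'0, hf'idem, hf'ab⟩ :=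
      exists_corner_abelian 𝒜 hreg hinj he0 hfa hab hy0 hyne
    have hyf' : y * f' = f' := by rw [hf'def, ← mul_assoc, hyy]
    have hf'y : f' * y = f' := by
      rw [hf'def, mul_assoc, ← hycen r₀ hr₀0, ← mul_assoc, hyy]
    have hyF : ∀ f ∈ F, y * f = 0 := by
      intro f hf
      have h1 : y * g = 0 := by rw [hycen g hg0, hgy]
      rw [← hgf f hf, ← mul_assoc, h1, zero_mul]
    have hf'notF : f' ∉ F := fun h => hf'ne (by rw [← hyf', hyF f' h])
    have hgood2 : insert f' F ∈ GoodS := by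
      constructor
      · intro f hfm
        rcases Set.mem_insert_iff.mp hfm with rfl | hf
        · exact ⟨hf'ne, hf'0, hf'idem, hf'ab⟩
        · exact hFgood f hf
      · intro f hfm f2 hf2m hne s hs
        rcases Set.mem_insert_iff.mp hfm with rfl | hf
        · rcases Set.mem_insert_iff.mp hf2m with rfl | hf2
          · exact absurd rfl hne
          · have h1 : y * f2 = 0 := hyF f2 hf2
            calc f * s * f2 = f * y * s * f2 := by rw [hf'y]
              _ = f * (y * s) * f2 := by simp only [mul_assoc]
              _ = f * (s * y) * f2 := by rw [hycen s hs]
              _ = f * s * (y * f2) := by simp only [mul_assoc]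
              _ = 0 := by rw [h1, mul_zero]
        · rcases Set.mem_insert_iff.mp hf2m with rfl | hf2
          · have h2 : f * y = 0 := by
              rw [← hycen f (hFmem0 f hf)]
              exact hyF f hf
            calc f * s * f2 = f * s * (y * f2) := by rw [hyf']
              _ = f * (s * y) * f2 := by simp only [mul_assoc]
              _ = f * (y * s) * f2 := by rw [← hycen s hs]
              _ = f * y * (s * f2) := by simp only [mul_assoc]
              _ = 0 := by rw [h2, zero_mul]
          · exact hFpair f hf f2 hf2 hne s hs
    exact hf'notF (hFmax' hgood2 (Set.subset_insert f' F) (Set.mem_insert f' F))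
  exact ⟨g, ⟨hg0, hgg, hfaith⟩, ⟨hg0, hgg, habel⟩⟩

end Aux

/-- If `R` is a graded von Neumann regular graded right self-injective
ring of gr-Type I, then `R₀` contains a faithful abelian idempotent, i.e. `R₀` is a
regular right self-injective ring of Type I. -/
theorem zero_component_typeI
    [DecidableEq ι] [AddCommGroup ι] [Ring R] (𝒜 : ι → AddSubgroup R) [GradedRing 𝒜]
    (hreg : GradedVNRegular 𝒜) (hinj : GradedSelfInjective 𝒜) (htype : GrTypeI 𝒜) :
    ZeroRegular 𝒜 ∧ ZeroSelfInjective 𝒜 ∧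
      ∃ e : R, ZeroFaithfulIdem 𝒜 e ∧ ZeroAbelianIdem 𝒜 e := by
  classical
  obtain ⟨e, hfa, hab⟩ := htype
  obtain ⟨⟨γ, heγ⟩, hee⟩ := hab.1
  by_cases he : e = (0 : R)
  · -- the ring is trivial
    have h10 : (1 : R) = 0 := by
      apply hfa.2 1 ⟨0, one_mem_zero 𝒜⟩ (one_mul 1) (fun r => by rw [one_mul, mul_one])
      rw [he, zero_mul]
    have hsub : Subsingleton R := subsingleton_of_zero_eq_one h10.symm
    refine ⟨?_, ?_, 0, ?_, ?_⟩
    · intro a _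
      exact ⟨0, zero_mem _, Subsingleton.elim _ _⟩
    · intro I hI f _ _ _
      exact ⟨0, zero_mem _, fun x _ => Subsingleton.elim _ _⟩
    · exact ⟨zero_mem _, Subsingleton.elim _ _, fun y _ _ _ _ => Subsingleton.elim _ _⟩
    · exact ⟨zero_mem _, Subsingleton.elim _ _,
        fun f _ _ _ x _ _ => Subsingleton.elim _ _⟩
  · have he2 : e ∈ 𝒜 (γ + γ) := hee ▸ SetLike.mul_mem_graded heγ heγ
    by_cases hγ : γ + γ = γ
    · have hγ0 : γ = 0 := by
        have := add_left_cancel (a := γ) (b := γ) (c := 0) (by rw [hγ, add_zero])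
        exact this
      have he0 : e ∈ 𝒜 (0 : ι) := hγ0 ▸ heγ
      exact ⟨zero_regular_of 𝒜 hreg, zero_self_injective_of 𝒜 hreg hinj,
        typeI_zero 𝒜 hreg hinj he0 hfa hab⟩
    · exact absurd (mem_two_deg_eq_zero 𝒜 he2 heγ hγ) he
end

section
/- Let R be a Γ-graded von Neumann regular graded right self-injective ring and A a graded right ideal of R. Then there exists a unique graded right ideal B of R such that B is a direct summand of R as a right R-module (i.e. there is a graded right ideal C with B ∩ C = 0 and B + C = R), A ⊆ B, and A is graded essential in B. -/
/- Setting: `Γ = ι` an additive abelian group, `R` a `ι`-graded ring with identity,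
with homogeneous components the additive subgroups `𝒜 γ`. -/

variable {ι R : Type*}

/-! Let `D` be a graded right ideal maximal with `A ∩ D = 0`, so that `A + D` is graded essential
in `R`. Graded self-injectivity extends the projection `A + D → A` to left multiplication by some
`e ∈ R₀`. Graded regularity makes `R` graded nonsingular: a homogeneous element annihilating a
graded essential subideal of `B` annihilates `B`. Hence `e² - e`, which kills `A + D`, vanishes,
and `B = eR` is a graded direct summand in which `A` is graded essential. For uniqueness, any graded
summand `B'` is `e'R` with `e' ∈ R₀` idempotent; if `A ⊆ B'` then `1 - e'` kills `A`, hence kills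
every `B ⊇ A` in which `A` is graded essential, so `B ⊆ B'`. -/

open DirectSum Set
open scoped Pointwise

section RightIdeal

variable [Ring R] {I J : Set R}

theorem IsRightIdealSet.neg_mem (hI : IsRightIdealSet I) {x : R} (hx : x ∈ I) : -x ∈ I := by
  simpa using hI.2.2 x hx (-1)

theorem IsRightIdealSet.sub_mem (hI : IsRightIdealSet I) {x y : R} (hx : x ∈ I) (hy : y ∈ I) :
    x - y ∈ I := by
  simpa [sub_eq_add_neg] using hI.2.1 x hx (-y) (hI.neg_mem hy)

theorem IsRightIdealSet.eq_of_add_eq_add (hI : IsRightIdealSet I) (hJ : IsRightIdealSet J)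
    (hIJ : ∀ x ∈ I ∩ J, x = 0) {a a' d d' : R} (ha : a ∈ I) (ha' : a' ∈ I) (hd : d ∈ J)
    (hd' : d' ∈ J) (h : a + d = a' + d') : a = a' := by
  have hsub : a - a' = d' - d := by rw [sub_eq_sub_iff_add_eq_add, h, add_comm]
  exact sub_eq_zero.1 (hIJ _ ⟨hI.sub_mem ha ha', hsub ▸ hJ.sub_mem hd' hd⟩)

end RightIdeal

section Graded

variable [DecidableEq ι] [AddCommGroup ι] [Ring R] {𝒜 : ι → AddSubgroup R} [GradedRing 𝒜]

theorem coe_decompose_add_apply (x y : R) (γ : ι) :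
    (decompose 𝒜 (x + y) γ : R) = decompose 𝒜 x γ + decompose 𝒜 y γ := by
  rw [decompose_add, DirectSum.add_apply, AddMemClass.coe_add]

theorem isGradedRightIdeal_univ (𝒜 : ι → AddSubgroup R) [GradedRing 𝒜] :
    IsGradedRightIdeal 𝒜 (univ : Set R) :=
  ⟨⟨trivial, fun _ _ _ _ => trivial, fun _ _ _ => trivial⟩, fun _ _ _ => trivial⟩

theorem isGradedRightIdeal_zero (𝒜 : ι → AddSubgroup R) [GradedRing 𝒜] :
    IsGradedRightIdeal 𝒜 ({0} : Set R) := by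
  refine ⟨⟨rfl, ?_, ?_⟩, ?_⟩ <;> rintro x rfl <;> simp

theorem isGradedRightIdeal_range_mul {u : R} {γ : ι} (hu : u ∈ 𝒜 γ) :
    IsGradedRightIdeal 𝒜 (range (u * ·)) := by
  refine ⟨⟨⟨0, mul_zero u⟩, ?_, ?_⟩, ?_⟩
  · rintro _ ⟨r, rfl⟩ _ ⟨s, rfl⟩
    exact ⟨r + s, mul_add u r s⟩
  · rintro _ ⟨r, rfl⟩ t
    exact ⟨r * t, (mul_assoc u r t).symm⟩
  · rintro _ ⟨r, rfl⟩ β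
    have h := coe_decompose_mul_add_of_left_mem 𝒜 (b := r) (j := β - γ) hu
    rw [add_sub_cancel] at h
    exact ⟨_, h.symm⟩

theorem IsGradedRightIdeal.add {A D : Set R} (hA : IsGradedRightIdeal 𝒜 A)
    (hD : IsGradedRightIdeal 𝒜 D) : IsGradedRightIdeal 𝒜 (A + D) := by
  refine ⟨⟨⟨0, hA.1.1, 0, hD.1.1, add_zero 0⟩, ?_, ?_⟩, ?_⟩
  · rintro _ ⟨a, ha, d, hd, rfl⟩ _ ⟨a', ha', d', hd', rfl⟩
    exact ⟨a + a', hA.1.2.1 a ha a' ha', d + d', hD.1.2.1 d hd d' hd', add_add_add_comm ..⟩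
  · rintro _ ⟨a, ha, d, hd, rfl⟩ r
    exact ⟨a * r, hA.1.2.2 a ha r, d * r, hD.1.2.2 d hd r, (add_mul a d r).symm⟩
  · rintro _ ⟨a, ha, d, hd, rfl⟩ γ
    exact ⟨_, hA.2 a ha γ, _, hD.2 d hd γ, (coe_decompose_add_apply a d γ).symm⟩

theorem IsGradedRightIdeal.sUnion {c : Set (Set R)} (hc : ∀ I ∈ c, IsGradedRightIdeal 𝒜 I)
    (hchain : IsChain (· ⊆ ·) c) (hne : c.Nonempty) : IsGradedRightIdeal 𝒜 (⋃₀ c) := by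
  obtain ⟨I₀, hI₀⟩ := hne
  refine ⟨⟨⟨I₀, hI₀, (hc I₀ hI₀).1.1⟩, ?_, ?_⟩, ?_⟩
  · rintro x ⟨I, hI, hxI⟩ y ⟨J, hJ, hyJ⟩
    rcases hchain.total hI hJ with hIJ | hJI
    · exact ⟨J, hJ, (hc J hJ).1.2.1 x (hIJ hxI) y hyJ⟩
    · exact ⟨I, hI, (hc I hI).1.2.1 x hxI y (hJI hyJ)⟩
  · rintro x ⟨I, hI, hxI⟩ r
    exact ⟨I, hI, (hc I hI).1.2.2 x hxI r⟩
  · rintro x ⟨I, hI, hxI⟩ γ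
    exact ⟨I, hI, (hc I hI).2 x hxI γ⟩

theorem GradedVNRegular.exists_mem_neg_mul_mul_eq (hreg : GradedVNRegular 𝒜) {z : R} {γ : ι}
    (hz : z ∈ 𝒜 γ) : ∃ w ∈ 𝒜 (-γ), z * w * z = z := by
  obtain ⟨b, hb⟩ := hreg z ⟨γ, hz⟩
  refine ⟨decompose 𝒜 b (-γ), SetLike.coe_mem _, ?_⟩
  calc z * decompose 𝒜 b (-γ) * z = z * decompose 𝒜 (b * z) (-γ + γ) := by
        rw [mul_assoc, coe_decompose_mul_add_of_right_mem 𝒜 hz]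
    _ = decompose 𝒜 (z * (b * z)) (γ + (-γ + γ)) :=
        (coe_decompose_mul_add_of_left_mem 𝒜 hz).symm
    _ = z := by rw [← mul_assoc, hb, add_neg_cancel_left, decompose_of_mem_same 𝒜 hz]

theorem GradedEssentialIn.mul_eq_zero_of_mem_grade (hreg : GradedVNRegular 𝒜) {A B : Set R}
    (hB : IsGradedRightIdeal 𝒜 B) (hAB : GradedEssentialIn 𝒜 A B) {g : R} {γ : ι}
    (hg : g ∈ 𝒜 γ) (hgA : ∀ a ∈ A, g * a = 0) {u : R} {δ : ι} (hu : u ∈ B) (huδ : u ∈ 𝒜 δ) :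
    g * u = 0 := by
  by_contra hc
  obtain ⟨t, ht, hct⟩ := hreg.exists_mem_neg_mul_mul_eq (SetLike.mul_mem_graded hg huδ)
  set c := g * u
  set v := u * (t * c)
  have hgv : g * v = c := by rw [← mul_assoc, ← mul_assoc]; exact hct
  have hv : v ≠ 0 := fun hv => hc (by rw [← hgv, hv, mul_zero])
  obtain ⟨_, ⟨haA, r, rfl⟩, ha⟩ :=
    hAB.2 _ (isGradedRightIdeal_range_mul (SetLike.mul_mem_graded huδ
      (SetLike.mul_mem_graded ht (SetLike.mul_mem_graded hg huδ))))
      (by rintro _ ⟨r, rfl⟩; exact hB.1.2.2 v (hB.1.2.2 u hu _) r) ⟨v, ⟨1, mul_one v⟩, hv⟩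
  have hcr : c * r = 0 := by rw [← hgv, mul_assoc, hgA _ haA]
  apply ha
  change u * (t * c) * r = 0
  rw [mul_assoc, mul_assoc, hcr, mul_zero, mul_zero]

theorem GradedEssentialIn.mul_eq_zero (hreg : GradedVNRegular 𝒜) {A B : Set R}
    (hB : IsGradedRightIdeal 𝒜 B) (hAB : GradedEssentialIn 𝒜 A B) {g : R} {γ : ι}
    (hg : g ∈ 𝒜 γ) (hgA : ∀ a ∈ A, g * a = 0) {x : R} (hx : x ∈ B) : g * x = 0 := by
  classical
  rw [← sum_support_decompose 𝒜 x, Finset.mul_sum]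
  exact Finset.sum_eq_zero fun δ _ =>
    hAB.mul_eq_zero_of_mem_grade hreg hB hg hgA (hB.2 x hx δ) (SetLike.coe_mem _)

def IsGradedDirectSummand (𝒜 : ι → AddSubgroup R) [GradedRing 𝒜] (B : Set R) : Prop :=
  ∃ C : Set R, IsGradedRightIdeal 𝒜 C ∧ (∀ x, x ∈ B ∩ C → x = 0) ∧
    ∀ x : R, ∃ b ∈ B, ∃ c ∈ C, x = b + c

theorem isGradedDirectSummand_range_mul {e : R} (he : e ∈ 𝒜 0) (hee : IsIdempotentElem e) :
    IsGradedDirectSummand 𝒜 (range (e * ·)) := by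
  refine ⟨range ((1 - e) * ·), isGradedRightIdeal_range_mul (sub_mem SetLike.GradedOne.one_mem he),
    ?_, fun x => ⟨e * x, ⟨x, rfl⟩, (1 - e) * x, ⟨x, rfl⟩, ?_⟩⟩
  · rintro _ ⟨⟨r, rfl⟩, s, hs⟩
    dsimp only at hs ⊢
    rw [← hee.eq, mul_assoc, ← hs, ← mul_assoc, hee.mul_one_sub_self, zero_mul]
  · rw [← add_mul, add_sub_cancel, one_mul]

theorem IsGradedDirectSummand.exists_idempotent {B : Set R} (hB : IsGradedRightIdeal 𝒜 B)
    (hsum : IsGradedDirectSummand 𝒜 B) : ∃ e ∈ 𝒜 0, e ∈ B ∧ ∀ b ∈ B, e * b = b := by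
  obtain ⟨C, hC, hBC, hdec⟩ := hsum
  obtain ⟨b, hb, c, hc, h1⟩ := hdec 1
  have hsum : (decompose 𝒜 b 0 : R) + decompose 𝒜 c 0 = 1 := by
    rw [← coe_decompose_add_apply, ← h1, decompose_of_mem_same 𝒜 SetLike.GradedOne.one_mem]
  set e : R := (decompose 𝒜 b 0 : R)
  have hfC : 1 - e ∈ C := by rw [← hsum, add_sub_cancel_left]; exact hC.2 c hc 0
  refine ⟨e, SetLike.coe_mem _, hB.2 b hb 0, fun b' hb' => ?_⟩
  have hfb' : (1 - e) * b' = b' - e * b' := by rw [sub_mul, one_mul]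
  have h0 := hBC _ ⟨hfb' ▸ hB.1.sub_mem hb' (hB.1.2.2 e (hB.2 b hb 0) b'), hC.1.2.2 _ hfC b'⟩
  rwa [hfb', sub_eq_zero, eq_comm] at h0

theorem GradedEssentialIn.subset_of_isGradedDirectSummand (hreg : GradedVNRegular 𝒜)
    {A B B' : Set R} (hB : IsGradedRightIdeal 𝒜 B) (hAB : GradedEssentialIn 𝒜 A B)
    (hB' : IsGradedRightIdeal 𝒜 B') (hsum : IsGradedDirectSummand 𝒜 B') (hAB' : A ⊆ B') :
    B ⊆ B' := by
  obtain ⟨e, he, heB', he_mul⟩ := hsum.exists_idempotent hB'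
  intro x hx
  have h := hAB.mul_eq_zero hreg hB (sub_mem SetLike.GradedOne.one_mem he)
    (fun a ha => by rw [sub_mul, one_mul, he_mul a (hAB' ha), sub_self]) hx
  rw [sub_mul, one_mul, sub_eq_zero] at h
  exact h ▸ hB'.1.2.2 e heB' x

theorem GradedSelfInjective.exists_mul_eq_of_disjoint (hinj : GradedSelfInjective 𝒜)
    {A D : Set R} (hA : IsGradedRightIdeal 𝒜 A) (hD : IsGradedRightIdeal 𝒜 D)
    (hAD : ∀ x ∈ A ∩ D, x = 0) :
    ∃ e ∈ 𝒜 0, (∀ a ∈ A, e * a = a) ∧ ∀ d ∈ D, e * d = 0 := by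
  classical
  let p : R → R := fun x => if h : x ∈ A + D then (Set.mem_add.1 h).choose else 0
  have hp : ∀ a ∈ A, ∀ d ∈ D, p (a + d) = a := by
    intro a ha d hd
    have h : a + d ∈ A + D := add_mem_add ha hd
    obtain ⟨ha', d', hd', h'⟩ := (Set.mem_add.1 h).choose_spec
    simp only [p, dif_pos h]
    exact hA.1.eq_of_add_eq_add hD.1 hAD ha' ha hd' hd h'
  obtain ⟨e, he, hpe⟩ := hinj (A + D) (hA.add hD) 0 p
    (by
      rintro _ ⟨a, ha, d, hd, rfl⟩ _ ⟨a', ha', d', hd', rfl⟩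
      rw [add_add_add_comm, hp a ha d hd, hp a' ha' d' hd',
        hp _ (hA.1.2.1 a ha a' ha') _ (hD.1.2.1 d hd d' hd')])
    (by
      rintro _ ⟨a, ha, d, hd, rfl⟩ r
      rw [add_mul, hp a ha d hd, hp _ (hA.1.2.2 a ha r) _ (hD.1.2.2 d hd r)])
    (by
      rintro δ _ ⟨a, ha, d, hd, rfl⟩ hδ
      have h := coe_decompose_add_apply (𝒜 := 𝒜) a d δ
      rw [decompose_of_mem_same 𝒜 hδ] at h
      rw [zero_add, hp a ha d hd,
        hA.1.eq_of_add_eq_add hD.1 hAD ha (hA.2 a ha δ) hd (hD.2 d hd δ) h]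
      exact SetLike.coe_mem _)
  refine ⟨e, he, fun a ha => ?_, fun d hd => ?_⟩
  · have h := hpe _ (add_mem_add ha hD.1.1)
    rw [hp a ha 0 hD.1.1, add_zero] at h
    exact h.symm
  · have h := hpe _ (add_mem_add hA.1.1 hd)
    rw [hp 0 hA.1.1 d hd, zero_add] at h
    exact h.symm

theorem gradedEssentialIn_add_of_maximal {A D : Set R} (hA : IsGradedRightIdeal 𝒜 A)
    (hD : Maximal (fun D => IsGradedRightIdeal 𝒜 D ∧ ∀ x ∈ A ∩ D, x = 0) D) :
    GradedEssentialIn 𝒜 (A + D) univ := by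
  obtain ⟨⟨hD, hAD⟩, hmax⟩ := hD
  refine ⟨subset_univ _, fun J hJ _ ⟨x, hxJ, hx⟩ => ?_⟩
  by_contra! h
  have hAD' : ∀ y ∈ A ∩ (D + J), y = 0 := by
    rintro _ ⟨hyA, d, hd, j, hj, rfl⟩
    dsimp only at hyA ⊢
    have hj0 : j = 0 := h j ⟨⟨d + j, hyA, -d, hD.1.neg_mem hd, add_neg_cancel_comm d j⟩, hj⟩
    rw [hj0, add_zero] at hyA ⊢
    exact hAD d ⟨hyA, hd⟩
  have hDJ : D + J ⊆ D :=
    hmax ⟨hD.add hJ, hAD'⟩ fun d hd => ⟨d, hd, 0, hJ.1.1, add_zero d⟩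
  exact hx (h x ⟨⟨0, hA.1.1, x, hDJ ⟨0, hD.1.1, x, hxJ, zero_add x⟩, zero_add x⟩, hxJ⟩)

theorem exists_disjoint_gradedEssentialIn_add {A : Set R} (hA : IsGradedRightIdeal 𝒜 A) :
    ∃ D, IsGradedRightIdeal 𝒜 D ∧ (∀ x ∈ A ∩ D, x = 0) ∧ GradedEssentialIn 𝒜 (A + D) univ := by
  obtain ⟨D, -, hD⟩ := zorn_subset_nonempty {D | IsGradedRightIdeal 𝒜 D ∧ ∀ x ∈ A ∩ D, x = 0}
    (fun c hc hchain hne => ⟨⋃₀ c,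
      ⟨IsGradedRightIdeal.sUnion (fun I hI => (hc hI).1) hchain hne,
        fun x ⟨hxA, I, hI, hxI⟩ => (hc hI).2 x ⟨hxA, hxI⟩⟩,
      fun _ => subset_sUnion_of_mem⟩)
    {0} ⟨isGradedRightIdeal_zero 𝒜, fun x hx => hx.2⟩
  exact ⟨D, hD.1.1, hD.1.2, gradedEssentialIn_add_of_maximal hA hD⟩

theorem isIdempotentElem_of_gradedEssentialIn_add (hreg : GradedVNRegular 𝒜) {A D : Set R} {e : R}
    (he : e ∈ 𝒜 0) (heA : ∀ a ∈ A, e * a = a) (heD : ∀ d ∈ D, e * d = 0)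
    (hess : GradedEssentialIn 𝒜 (A + D) univ) : IsIdempotentElem e := by
  have h := hess.mul_eq_zero hreg (isGradedRightIdeal_univ 𝒜) (g := e * e - e)
    (sub_mem (zero_add (0 : ι) ▸ SetLike.mul_mem_graded he he) he)
    (by
      rintro _ ⟨a, ha, d, hd, rfl⟩
      simp only [sub_mul, mul_add, mul_assoc, heA a ha, heD d hd, mul_zero, sub_self, add_zero])
    (mem_univ 1)
  rwa [mul_one, sub_eq_zero] at h

theorem gradedEssentialIn_range_mul {A D : Set R} {e : R} (hee : IsIdempotentElem e)
    (heA : ∀ a ∈ A, e * a = a) (heD : ∀ d ∈ D, e * d = 0)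
    (hess : GradedEssentialIn 𝒜 (A + D) univ) : GradedEssentialIn 𝒜 A (range (e * ·)) := by
  refine ⟨fun a ha => ⟨a, heA a ha⟩, fun J hJ hJe hne => ?_⟩
  obtain ⟨y, ⟨⟨a, ha, d, hd, rfl⟩, hyJ⟩, hy⟩ := hess.2 J hJ (subset_univ J) hne
  obtain ⟨r, hr⟩ := hJe hyJ
  dsimp only at hr hyJ hy ⊢
  have hya : a + d = a := by
    rw [← hr, ← hee.eq, mul_assoc, hr, mul_add, heA a ha, heD d hd, add_zero]
  exact ⟨a + d, ⟨by rw [hya]; exact ha, hyJ⟩, hy⟩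

end Graded

/-- Let `R` be a graded von Neumann regular graded right self-injective
ring and `A` a graded right ideal. Then there is a unique graded right ideal `B` of `R`
which is a direct summand of `R` (as a right `R`-module, with a graded complement) such
that `A ⊆ B` and `A` is graded essential in `B`. -/
theorem unique_essential_closure_summand
    [DecidableEq ι] [AddCommGroup ι] [Ring R] (𝒜 : ι → AddSubgroup R) [GradedRing 𝒜]
    (hreg : GradedVNRegular 𝒜) (hinj : GradedSelfInjective 𝒜)
    (A : Set R) (hA : IsGradedRightIdeal 𝒜 A) :
    ∃! B : Set R, IsGradedRightIdeal 𝒜 B ∧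
      (∃ C : Set R, IsGradedRightIdeal 𝒜 C ∧ (∀ x, x ∈ B ∩ C → x = 0) ∧
        ∀ x : R, ∃ b ∈ B, ∃ c ∈ C, x = b + c) ∧
      A ⊆ B ∧ GradedEssentialIn 𝒜 A B := by
  obtain ⟨D, hD, hAD, hess⟩ := exists_disjoint_gradedEssentialIn_add hA
  obtain ⟨e, he, heA, heD⟩ := hinj.exists_mul_eq_of_disjoint hA hD hAD
  have hee := isIdempotentElem_of_gradedEssentialIn_add hreg he heA heD hess
  have hB := isGradedRightIdeal_range_mul he
  have hAB := gradedEssentialIn_range_mul hee heA heD hess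
  refine ⟨range (e * ·), ⟨hB, isGradedDirectSummand_range_mul he hee, hAB.1, hAB⟩, ?_⟩
  rintro B' ⟨hB', hsum', hAB', hess'⟩
  exact (hess'.subset_of_isGradedDirectSummand hreg hB' hB
    (isGradedDirectSummand_range_mul he hee) hAB.1).antisymm
    (hAB.subset_of_isGradedDirectSummand hreg hB hB' hsum' hAB')
end
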